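/- arXiv:2010.05779 — 8 statements merged into one kernel-verified Lean document; each statement's English description precedes it below -/
import Mathlib

section
/- Let $n$ be a positive integer, let $H_1$ be a graph with at least $n$ vertices, and let $G_1$ be a graph that is universal for the family of $n$-vertex subgraphs of $H_1$. Then for any graph $H_2$, the strong product $G_1 \boxtimes H_2$ is universal for the family of $n$-vertex subgraphs of $H_1 \boxtimes H_2$. -/
/-- The strong product of two simple graphs. -/
def strongProd {α β : Type*} (A : SimpleGraph α) (B : SimpleGraph β) :
    SimpleGraph (α × β) where
  Adj p q := p ≠ q ∧ (p.1 = q.1 ∨ A.Adj p.1 q.1) ∧ (p.2 = q.2 ∨ B.Adj p.2 q.2)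
  symm := by
    constructor
    rintro ⟨x₁, y₁⟩ ⟨x₂, y₂⟩ ⟨hne, h1, h2⟩
    exact ⟨Ne.symm hne, h1.imp Eq.symm A.adj_symm, h2.imp Eq.symm B.adj_symm⟩
  loopless := by constructor; rintro p ⟨hne, -, -⟩; exact hne rfl

/-- `H` is isomorphic to a (not necessarily induced) subgraph of `G`. -/
def CopyIn {γ δ : Type*} (H : SimpleGraph γ) (G : SimpleGraph δ) : Prop :=
  ∃ f : γ → δ, Function.Injective f ∧ ∀ a b, H.Adj a b → G.Adj (f a) (f b)

/-!
Project a copy of `F` in `H₁ ⊠ H₂` to `H₁`: the first coordinates fill at most `n` vertices of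
`H₁`, which we enlarge to a set `T` of exactly `n` vertices. The induced graph `H₁[T]` is an
`n`-vertex subgraph of `H₁`, hence sits in `G₁`, and applying that copy to the first coordinate
(keeping the second) carries the copy of `F` from `H₁[T] ⊠ H₂` into `G₁ ⊠ H₂`.
-/

open SimpleGraph Finset

theorem copyIn_iff_isContained {γ δ : Type*} {H : SimpleGraph γ} {G : SimpleGraph δ} :
    CopyIn H G ↔ H ⊑ G :=
  ⟨fun ⟨f, hf, hadj⟩ ↦ ⟨⟨⟨f, hadj _ _⟩, hf⟩⟩,
    fun ⟨f⟩ ↦ ⟨f, f.injective, fun _ _ ↦ f.toHom.map_adj⟩⟩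

theorem Finset.exists_superset_card_eq_of_injective {α : Type*} [DecidableEq α] {n : ℕ}
    {s : Finset α} (hs : #s ≤ n) {u : Fin n → α} (hu : Function.Injective u) :
    ∃ t : Finset α, s ⊆ t ∧ #t = n := by
  have hn : n ≤ #(s ∪ univ.image u) := calc
    n = #(univ.image u) := by simp [card_image_of_injective _ hu]
    _ ≤ #(s ∪ univ.image u) := card_le_card subset_union_right
  obtain ⟨t, hst, -, ht⟩ := exists_subsuperset_card_eq subset_union_left hs hn
  exact ⟨t, hst, ht⟩

namespace SimpleGraph

variable {α α' β γ : Type*} {A : SimpleGraph α} {A' : SimpleGraph α'} {B : SimpleGraph β}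
  {F : SimpleGraph γ}

def Copy.strongProdLeft (f : Copy A A') (B : SimpleGraph β) :
    Copy (strongProd A B) (strongProd A' B) where
  toHom.toFun p := (f p.1, p.2)
  toHom.map_rel' := fun ⟨hne, h₁, h₂⟩ ↦
    ⟨fun h ↦ hne (Prod.ext (f.injective (Prod.ext_iff.1 h).1) (Prod.ext_iff.1 h).2),
      h₁.imp (congrArg f) f.toHom.map_adj, h₂⟩
  injective' _ _ h := Prod.ext (f.injective (Prod.ext_iff.1 h).1) (Prod.ext_iff.1 h).2

theorem IsContained.strongProd_left (h : A ⊑ A') (B : SimpleGraph β) :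
    strongProd A B ⊑ strongProd A' B :=
  let ⟨f⟩ := h; ⟨f.strongProdLeft B⟩

/-- Corestrict the first coordinate of a copy in `A ⊠ B` to a set `s` containing its values. -/
def Copy.strongProdInduceLeft (f : Copy F (strongProd A B)) (s : Set α)
    (hs : ∀ v, (f v).1 ∈ s) : Copy F (strongProd (A.induce s) B) where
  toHom.toFun v := (⟨(f v).1, hs v⟩, (f v).2)
  toHom.map_rel' hvw :=
    let ⟨hne, h₁, h₂⟩ := f.toHom.map_adj hvw
    ⟨fun h ↦ hne (Prod.ext (congrArg Subtype.val (Prod.ext_iff.1 h).1) (Prod.ext_iff.1 h).2),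
      h₁.imp Subtype.ext _root_.id, h₂⟩
  injective' _ _ h :=
    f.injective (Prod.ext (congrArg Subtype.val (Prod.ext_iff.1 h).1) (Prod.ext_iff.1 h).2)

theorem induce_isContained_of_card_eq {n : ℕ} {H : SimpleGraph α} {G : SimpleGraph α'}
    (huniv : ∀ F : SimpleGraph (Fin n), F ⊑ H → F ⊑ G) {t : Finset α} (ht : #t = n) :
    H.induce (t : Set α) ⊑ G :=
  let e := Iso.map (t.equivFinOfCardEq ht) (H.induce (t : Set α))
  e.isContained.trans (huniv _ (e.symm.isContained.trans ⟨Copy.induce H _⟩))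

end SimpleGraph

theorem stmt1_general {α₁ β₁ α₂ : Type*} (n : ℕ)
    (H₁ : SimpleGraph α₁) (G₁ : SimpleGraph β₁) (H₂ : SimpleGraph α₂)
    (hbig : ∃ f : Fin n → α₁, Function.Injective f)
    (huniv : ∀ F : SimpleGraph (Fin n), CopyIn F H₁ → CopyIn F G₁) :
    ∀ F : SimpleGraph (Fin n),
      CopyIn F (strongProd H₁ H₂) → CopyIn F (strongProd G₁ H₂) := by
  classical
  simp only [copyIn_iff_isContained] at huniv ⊢
  rintro F ⟨f⟩
  obtain ⟨u, hu⟩ := hbig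
  obtain ⟨t, hst, ht⟩ := exists_superset_card_eq_of_injective
    (card_image_le.trans_eq (card_fin n) : #(univ.image fun v ↦ (f v).1) ≤ n) hu
  have hf : ∀ v, (f v).1 ∈ (t : Set α₁) := fun v ↦ hst (mem_image_of_mem _ (mem_univ v))
  exact (f.strongProdInduceLeft _ hf).isContained.trans
    ((induce_isContained_of_card_eq huniv ht).strongProd_left H₂)

/-- If `G₁` is universal for `n`-vertex subgraphs of `H₁` (which has at least `n`
vertices), then `G₁ ⊠ H₂` is universal for `n`-vertex subgraphs of `H₁ ⊠ H₂`. -/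
theorem stmt1 {α₁ β₁ α₂ : Type*} (n : ℕ) (hn : 0 < n)
    (H₁ : SimpleGraph α₁) (G₁ : SimpleGraph β₁) (H₂ : SimpleGraph α₂)
    (hbig : ∃ f : Fin n → α₁, Function.Injective f)
    (huniv : ∀ F : SimpleGraph (Fin n), CopyIn F H₁ → CopyIn F G₁) :
    ∀ F : SimpleGraph (Fin n),
      CopyIn F (strongProd H₁ H₂) → CopyIn F (strongProd G₁ H₂) :=
  stmt1_general n H₁ G₁ H₂ hbig huniv
end

section
/- For every positive integers $n \ge 1$ and $\omega \ge 1$, the graph $C_{\lceil \log_2 n \rceil} \boxtimes K_\omega$ is universal for the class of $n$-vertex interval graphs with clique number at most $\omega$; that is, every $n$-vertex interval graph with clique number at most $\omega$ is isomorphic to a subgraph of $C_{\lceil \log_2 n \rceil} \boxtimes K_\omega$. -/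
open Set

/-- `v` is a `B_d`-ancestor of `w` in the complete binary search tree on
`{1, …, 2^(d+1)-1}`: the descendants of `v = a·2^s` (`a` odd) are exactly the
integers in the open interval `(v - 2^s, v + 2^s)`. -/
def bstAnc (v w : ℕ) : Prop :=
  v - 2 ^ (padicValNat 2 v) < w ∧ w < v + 2 ^ (padicValNat 2 v)

/-- The closure `C_d` of the complete binary search tree `B_d` on `{1, …, 2^(d+1)-1}`. -/
def closureGraph (d : ℕ) : SimpleGraph {v : ℕ // 1 ≤ v ∧ v ≤ 2 ^ (d + 1) - 1} where
  Adj v w := v ≠ w ∧ (bstAnc v.val w.val ∨ bstAnc w.val v.val)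
  symm := by constructor; rintro v w ⟨hne, h⟩; exact ⟨Ne.symm hne, h.symm⟩
  loopless := by constructor; rintro v ⟨hne, -⟩; exact hne rfl

def IsIntervalGraph {V : Type*} (G : SimpleGraph V) : Prop :=
  ∃ a b : V → ℝ, (∀ v, a v ≤ b v) ∧
    ∀ v w, G.Adj v w ↔ v ≠ w ∧ (Icc (a v) (b v) ∩ Icc (a w) (b w)).Nonempty

/-!
Sort the vertices by left endpoint, with ranks in `[1, n]`, and let `m v` be the largest rank in
the closed neighbourhood of `v`: the integer intervals `[rank v, m v]` represent the same graph.
Map `v` to the point `t v` of its integer interval of largest `2`-adic valuation; as `n ≤ 2^d`,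
this is a node of `B_d`. If `s = v₂(t)`, both `t ± 2^s` have valuation `> s`, so if no point
between `t` and `t'` has valuation above `s`, then `t'` lies in `(t - 2^s, t + 2^s)`, i.e. below
`t`. When two integer intervals meet, every point between their nodes lies in one of them, so
the node of larger valuation is an ancestor of the other. Vertices with the same node form a
clique, so there are at most `ω` of them, and the `K_ω` coordinate tells them apart.
-/

section Valuation

lemma padicValNat_two_pow_mul_odd {k m : ℕ} (hm : Odd m) : padicValNat 2 (2 ^ k * m) = k := by
  have : Fact (Nat.Prime 2) := ⟨Nat.prime_two⟩
  rw [padicValNat.mul (by positivity) (by rintro rfl; simp at hm), padicValNat.prime_pow,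
    padicValNat.eq_zero_of_not_dvd hm.not_two_dvd_nat, add_zero]

lemma padicValNat_two_lt_add_two_pow {t : ℕ} (ht : t ≠ 0) :
    padicValNat 2 t < padicValNat 2 (t + 2 ^ padicValNat 2 t) := by
  have : Fact (Nat.Prime 2) := ⟨Nat.prime_two⟩
  obtain ⟨k, _, ⟨j, rfl⟩, rfl⟩ := Nat.exists_eq_two_pow_mul_odd ht
  rw [padicValNat_two_pow_mul_odd ⟨j, rfl⟩, Nat.lt_iff_add_one_le,
    ← padicValNat_dvd_iff_le (by positivity)]
  exact ⟨j + 1, by ring⟩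

lemma padicValNat_two_lt_sub_two_pow {t : ℕ} (ht : 2 ^ padicValNat 2 t < t) :
    padicValNat 2 t < padicValNat 2 (t - 2 ^ padicValNat 2 t) := by
  have : Fact (Nat.Prime 2) := ⟨Nat.prime_two⟩
  obtain ⟨k, _, ⟨j, rfl⟩, rfl⟩ := Nat.exists_eq_two_pow_mul_odd (n := t) (by rintro rfl; simp at ht)
  rw [padicValNat_two_pow_mul_odd ⟨j, rfl⟩] at ht ⊢
  rw [Nat.lt_iff_add_one_le, ← padicValNat_dvd_iff_le (by omega)]
  exact ⟨j, Nat.sub_eq_of_eq_add (by ring)⟩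

end Valuation

section BinarySearchTree

lemma bstAnc_of_forall_mem_uIcc {t₁ t₂ : ℕ} (h₁ : t₁ ≠ 0) (h₂ : t₂ ≠ 0)
    (hmax : ∀ y ∈ uIcc t₁ t₂, padicValNat 2 y ≤ padicValNat 2 t₁) : bstAnc t₁ t₂ := by
  have hpow : 1 ≤ 2 ^ padicValNat 2 t₁ := Nat.one_le_two_pow
  constructor
  · by_contra! h
    have hlt : 2 ^ padicValNat 2 t₁ < t₁ := by omega
    have := hmax _ (mem_uIcc.2 (Or.inr ⟨h, Nat.sub_le _ _⟩))
    have := padicValNat_two_lt_sub_two_pow hlt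
    omega
  · by_contra! h
    have := hmax _ (mem_uIcc.2 (Or.inl ⟨Nat.le_add_right _ _, h⟩))
    have := padicValNat_two_lt_add_two_pow h₁
    omega

lemma bstAnc_or_bstAnc_of_isMaxOn {l₁ m₁ l₂ m₂ t₁ t₂ : ℕ} (hl₁ : l₁ ≠ 0) (hl₂ : l₂ ≠ 0)
    (ht₁ : t₁ ∈ Icc l₁ m₁) (ht₂ : t₂ ∈ Icc l₂ m₂)
    (hmax₁ : IsMaxOn (padicValNat 2) (Icc l₁ m₁) t₁)
    (hmax₂ : IsMaxOn (padicValNat 2) (Icc l₂ m₂) t₂)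
    (hmeet : (Icc l₁ m₁ ∩ Icc l₂ m₂).Nonempty) : bstAnc t₁ t₂ ∨ bstAnc t₂ t₁ := by
  wlog hle : padicValNat 2 t₂ ≤ padicValNat 2 t₁ generalizing l₁ m₁ l₂ m₂ t₁ t₂
  · exact (this hl₂ hl₁ ht₂ ht₁ hmax₂ hmax₁ (inter_comm _ _ ▸ hmeet) (le_of_not_ge hle)).symm
  obtain ⟨x, ⟨hx₁, hx₁'⟩, hx₂, hx₂'⟩ := hmeet
  obtain ⟨ht₁, ht₁'⟩ := ht₁
  obtain ⟨ht₂, ht₂'⟩ := ht₂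
  refine Or.inl (bstAnc_of_forall_mem_uIcc (by omega) (by omega) fun y hy => ?_)
  have hy' : y ∈ Icc l₁ m₁ ∨ y ∈ Icc l₂ m₂ := by
    simp only [mem_uIcc, mem_Icc] at hy ⊢
    omega
  rcases hy' with hy' | hy'
  · exact isMaxOn_iff.1 hmax₁ y hy'
  · exact (isMaxOn_iff.1 hmax₂ y hy').trans hle

end BinarySearchTree

section BlowUp

variable {V α : Type*} [Fintype V] [DecidableEq α]

lemma exists_injective_prod_fin_of_card_fiber_le (f : V → α) {ω : ℕ}
    (hf : ∀ x, (Finset.univ.filter fun v => f v = x).card ≤ ω) :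
    ∃ c : V → Fin ω, Function.Injective fun v => (f v, c v) := by
  obtain ⟨e⟩ : Nonempty (∀ x, {v // f v = x} ↪ Fin ω) := ⟨fun x =>
    (Function.Embedding.nonempty_of_card_le (by simpa [Fintype.card_subtype] using hf x)).some⟩
  have he : ∀ x v (hv : f v = x), e (f v) ⟨v, rfl⟩ = e x ⟨v, hv⟩ := by
    rintro _ v rfl
    rfl
  refine ⟨fun v => e (f v) ⟨v, rfl⟩, fun p q hpq => ?_⟩
  obtain ⟨hfpq, hc⟩ := Prod.mk.inj hpq
  dsimp only at hc
  rw [he _ p hfpq] at hc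
  exact congrArg Subtype.val ((e (f q)).injective hc)

lemma copyIn_strongProd_top_of_card_fiber_le {G : SimpleGraph V} {H : SimpleGraph α} {ω : ℕ}
    (f : V → α) (hf : ∀ x, (Finset.univ.filter fun v => f v = x).card ≤ ω)
    (hadj : ∀ u v, G.Adj u v → f u = f v ∨ H.Adj (f u) (f v)) :
    CopyIn G (strongProd H (⊤ : SimpleGraph (Fin ω))) := by
  obtain ⟨c, hc⟩ := exists_injective_prod_fin_of_card_fiber_le f hf
  exact ⟨_, hc, fun u v huv => ⟨hc.ne huv.ne, hadj u v huv,
    (eq_or_ne (c u) (c v)).imp_right (SimpleGraph.top_adj _ _).2⟩⟩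

end BlowUp

theorem copyIn_closureGraph_strongProd_of_nat_intervals {V : Type*} [Fintype V]
    {G : SimpleGraph V} {d ω : ℕ} (l m : V → ℕ) (hl : ∀ v, l v ≠ 0) (hlm : ∀ v, l v ≤ m v)
    (hm : ∀ v, m v < 2 ^ (d + 1))
    (hG : ∀ u v, G.Adj u v ↔ u ≠ v ∧ (Icc (l u) (m u) ∩ Icc (l v) (m v)).Nonempty)
    (hclique : ∀ s : Finset V, G.IsClique ↑s → s.card ≤ ω) :
    CopyIn G (strongProd (closureGraph d) (⊤ : SimpleGraph (Fin ω))) := by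
  have hmax : ∀ v, ∃ t ∈ Icc (l v) (m v), IsMaxOn (padicValNat 2) (Icc (l v) (m v)) t :=
    fun v => (exists_max_image _ _ (finite_Icc _ _) (nonempty_Icc.2 (hlm v))).imp
      fun _ ⟨ht, hmax⟩ => ⟨ht, isMaxOn_iff.2 hmax⟩
  choose t ht htmax using hmax
  let node : V → {x : ℕ // 1 ≤ x ∧ x ≤ 2 ^ (d + 1) - 1} := fun v =>
    ⟨t v, by have := hl v; have := (ht v).1; omega, by have := hm v; have := (ht v).2; omega⟩
  refine copyIn_strongProd_top_of_card_fiber_le node (fun x => hclique _ ?_) fun u v huv => ?_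
  · intro p hp q hq hpq
    have htpq : t p = t q := congrArg Subtype.val ((Finset.mem_filter.1 hp).2.trans
      (Finset.mem_filter.1 hq).2.symm)
    exact (hG p q).2 ⟨hpq, t p, ht p, htpq ▸ ht q⟩
  · refine or_iff_not_imp_left.2 fun hne => ⟨hne, ?_⟩
    exact bstAnc_or_bstAnc_of_isMaxOn (hl u) (hl v) (ht u) (ht v) (htmax u) (htmax v)
      ((hG u v).1 huv).2

lemma exists_rank {V α : Type*} [Fintype V] [LinearOrder α] (a : V → α) :
    ∃ r : V → ℕ, (∀ v, r v < Fintype.card V) ∧ ∀ p q, r p ≤ r q → a p ≤ a q := by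
  classical
  refine ⟨fun v => (Finset.univ.filter fun w => a w < a v).card, fun v => ?_, fun p q => ?_⟩
  · exact Finset.card_lt_card (Finset.filter_ssubset.2 ⟨v, Finset.mem_univ _, lt_irrefl _⟩)
  · contrapose!
    intro hqp
    refine Finset.card_lt_card ((Finset.ssubset_iff_of_subset ?_).2 ⟨q, ?_, ?_⟩)
    · intro w hw
      simp only [Finset.mem_filter, Finset.mem_univ, true_and] at hw ⊢
      exact hw.trans hqp
    · simpa using hqp
    · simp

theorem IsIntervalGraph.exists_nat_intervals {V : Type*} [Fintype V] {G : SimpleGraph V}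
    (hG : IsIntervalGraph G) :
    ∃ l m : V → ℕ, (∀ v, l v ≠ 0) ∧ (∀ v, l v ≤ m v) ∧ (∀ v, m v ≤ Fintype.card V) ∧
      ∀ u v, G.Adj u v ↔ u ≠ v ∧ (Icc (l u) (m u) ∩ Icc (l v) (m v)).Nonempty := by
  classical
  obtain ⟨a, b, hab, hadj⟩ := hG
  obtain ⟨r, hr_lt, hr⟩ := exists_rank a
  let N : V → Finset V := fun v => insert v (Finset.univ.filter (G.Adj v))
  let m : V → ℕ := fun v => (N v).sup (r · + 1)
  have ha_le_b : ∀ v, ∀ w ∈ N v, a w ≤ b v := by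
    intro v w hw
    rcases Finset.mem_insert.1 hw with rfl | hw
    · exact hab w
    · obtain ⟨-, x, hxv, hxw⟩ := (hadj v w).1 (Finset.mem_filter.1 hw).2
      exact hxw.1.trans hxv.2
  have hself : ∀ v, r v + 1 ≤ m v := fun v =>
    Finset.le_sup (f := (r · + 1)) (Finset.mem_insert_self v _)
  suffices hadj_iff : ∀ u v, r u ≤ r v → (G.Adj u v ↔ u ≠ v ∧ r v + 1 ≤ m u) by
    refine ⟨(r · + 1), m, fun v => Nat.succ_ne_zero _, hself,
      fun v => Finset.sup_le fun w _ => hr_lt w, fun u v => ?_⟩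
    have := hself u
    have := hself v
    simp only [Icc_inter_Icc, nonempty_Icc, sup_le_iff, le_inf_iff]
    rcases le_total (r u) (r v) with h | h
    · rw [hadj_iff u v h]
      exact and_congr_right fun _ => by omega
    · rw [G.adj_comm, hadj_iff v u h, ne_comm]
      exact and_congr_right fun _ => by omega
  intro u v huv
  constructor
  · exact fun h => ⟨h.ne, Finset.le_sup (f := (r · + 1))
    (Finset.mem_insert_of_mem (Finset.mem_filter.2 ⟨Finset.mem_univ _, h⟩))⟩
  · rintro ⟨hne, hvu⟩
    -- `m u` is the rank of a closed neighbour `w` of `u`, and `a v ≤ a w ≤ b u`.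
    obtain ⟨w, hw, hmw⟩ := Finset.exists_mem_eq_sup (N u) (Finset.insert_nonempty _ _) (r · + 1)
    have hvw : a v ≤ a w := hr v w (by simp only [m] at hvu; omega)
    exact (hadj u v).2 ⟨hne, a v, ⟨hr u v huv, hvw.trans (ha_le_b u w hw)⟩, le_rfl, hab v⟩

theorem stmt3_general (n ω : ℕ) (G : SimpleGraph (Fin n)) (hint : IsIntervalGraph G)
    (hclique : ∀ s : Finset (Fin n), G.IsClique ↑s → s.card ≤ ω) :
    CopyIn G (strongProd (closureGraph (Nat.clog 2 n)) (⊤ : SimpleGraph (Fin ω))) := by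
  obtain ⟨l, m, hl, hlm, hm, hG⟩ := hint.exists_nat_intervals
  refine copyIn_closureGraph_strongProd_of_nat_intervals l m hl hlm (fun v => ?_) hG hclique
  calc m v ≤ n := by simpa using hm v
    _ ≤ 2 ^ Nat.clog 2 n := Nat.le_pow_clog one_lt_two n
    _ < 2 ^ (Nat.clog 2 n + 1) := Nat.pow_lt_pow_right one_lt_two (lt_add_one _)

/-- Every `n`-vertex interval graph with clique number at most `ω` is isomorphic to
a subgraph of `C_⌈log₂ n⌉ ⊠ K_ω`. -/
theorem stmt3 (n ω : ℕ) (hn : 1 ≤ n) (hω : 1 ≤ ω)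
    (G : SimpleGraph (Fin n)) (hint : IsIntervalGraph G)
    (hclique : ∀ s : Finset (Fin n), G.IsClique ↑s → s.card ≤ ω) :
    CopyIn G (strongProd (closureGraph (Nat.clog 2 n)) (⊤ : SimpleGraph (Fin ω))) :=
  stmt3_general n ω G hint hclique
end

section
/- A universal graph for the family of all $n$-vertex planar graphs must have at least $\Omega(n \log n)$ edges. More precisely, if $G$ is a graph containing, for every $t \in \{1, \ldots, n\}$, the forest consisting of $t$ disjoint copies of the star $K_{1, \lfloor n/t \rfloor - 1}$ as a subgraph, then the non-increasing degree sequence of $G$ dominates the sequence $(n-1, \lfloor n/2 \rfloor - 1, \lfloor n/3 \rfloor - 1, \ldots)$ termwise, and hence $G$ has at least $\frac{1}{2}\sum_{t=1}^{n}(\lfloor n/t \rfloor - 1)$ edges. -/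
/-- The forest consisting of `t` disjoint copies of the star `K_{1,m-1}`:
in each copy `i : Fin t`, the hub is the vertex with second coordinate `0`
and the leaves are the remaining `m - 1` vertices. -/
def starForest (t m : ℕ) : SimpleGraph (Fin t × Fin m) where
  Adj u v := u.1 = v.1 ∧ ((u.2.val = 0 ∧ v.2.val ≠ 0) ∨ (u.2.val ≠ 0 ∧ v.2.val = 0))
  symm := ⟨by rintro u v ⟨h1, h2⟩; exact ⟨h1.symm, by tauto⟩⟩
  loopless := ⟨by rintro u ⟨-, h⟩; rcases h with ⟨h1, h2⟩ | ⟨h1, h2⟩ <;> exact absurd h2 (by tauto)⟩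

/-
Embedding the `t`-star forest places `t` distinct hubs, each of degree at least `⌊n/t⌋ - 1`.
For the edge bound, count by levels: the number of `t ≤ n` with `⌊n/t⌋ - 1 > k` is at most the
largest such `t`, and that many vertices have degree `> k`. Summing over `k` compares
`∑ₜ (⌊n/t⌋ - 1)` with `∑ᵥ deg v = 2|E|`.
-/

open Finset SimpleGraph

lemma CopyIn.isContained {γ δ : Type*} {H : SimpleGraph γ} {G : SimpleGraph δ}
    (h : CopyIn H G) : H ⊑ G := by
  obtain ⟨f, hf, hadj⟩ := h
  exact ⟨⟨⟨f, hadj _ _⟩, hf⟩⟩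

instance (t m : ℕ) : DecidableRel (starForest t m).Adj := fun u v =>
  inferInstanceAs (Decidable (u.1 = v.1 ∧
    ((u.2.val = 0 ∧ v.2.val ≠ 0) ∨ (u.2.val ≠ 0 ∧ v.2.val = 0))))

lemma starForest_neighborFinset_hub {t m : ℕ} (i : Fin t) (hm : 0 < m) :
    (starForest t m).neighborFinset (i, ⟨0, hm⟩) =
      (univ.erase ⟨0, hm⟩).map (Function.Embedding.sectR i (Fin m)) := by
  ext ⟨j, k⟩
  rw [mem_neighborFinset]
  aesop (add simp [starForest, Fin.ext_iff])

lemma starForest_degree_hub {t m : ℕ} (i : Fin t) (hm : 0 < m) :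
    (starForest t m).degree (i, ⟨0, hm⟩) = m - 1 := by
  rw [← card_neighborFinset_eq_degree, starForest_neighborFinset_hub, card_map,
    card_erase_of_mem (mem_univ _), card_univ, Fintype.card_fin]

lemma exists_card_eq_forall_le_degree_of_copyIn_starForest {V : Type*} [Fintype V]
    {G : SimpleGraph V} [DecidableRel G.Adj] {t m : ℕ} (hm : 0 < m)
    (h : CopyIn (starForest t m) G) :
    ∃ s : Finset V, #s = t ∧ ∀ v ∈ s, m - 1 ≤ G.degree v := by
  obtain ⟨f⟩ := h.isContained
  refine ⟨univ.map ((Function.Embedding.sectL (Fin t) (⟨0, hm⟩ : Fin m)).trans f.toEmbedding),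
    by simp, ?_⟩
  simp only [mem_map, mem_univ, true_and]
  rintro _ ⟨i, rfl⟩
  exact (starForest_degree_hub i hm).ge.trans (f.degree_le _)

lemma sum_eq_sum_range_card_filter_lt {ι : Type*} (s : Finset ι) (f : ι → ℕ) {N : ℕ}
    (hN : ∀ x ∈ s, f x ≤ N) :
    ∑ x ∈ s, f x = ∑ k ∈ range N, #{x ∈ s | k < f x} := by
  simp_rw [card_filter]
  rw [sum_comm]
  refine sum_congr rfl fun x hx => ?_
  have hfilter : {k ∈ range N | k < f x} = range (f x) := by
    ext k
    simp only [mem_filter, mem_range]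
    have := hN x hx
    omega
  rw [← card_filter, hfilter, card_range]

section DominatedSequence

variable {ι : Type*} [Fintype ι] {d : ι → ℕ} {a : ℕ → ℕ} {n : ℕ}

lemma card_filter_lt_le_of_exists_card_eq
    (h : ∀ t ∈ Icc 1 n, ∃ s : Finset ι, #s = t ∧ ∀ v ∈ s, a t ≤ d v) (k : ℕ) :
    #{t ∈ Icc 1 n | k < a t} ≤ #{v | k < d v} := by
  set T := {t ∈ Icc 1 n | k < a t}
  rcases T.eq_empty_or_nonempty with hT | hT
  · simp [hT]
  have ht₀ := mem_filter.mp (T.max'_mem hT)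
  obtain ⟨s, hs, hsd⟩ := h _ ht₀.1
  have hT_sub : T ⊆ Icc 1 (T.max' hT) := fun t ht =>
    mem_Icc.mpr ⟨(mem_Icc.mp (mem_filter.mp ht).1).1, T.le_max' t ht⟩
  have hs_sub : s ⊆ ({v | k < d v} : Finset ι) := fun v hv =>
    mem_filter.mpr ⟨mem_univ v, ht₀.2.trans_le (hsd v hv)⟩
  calc #T ≤ #(Icc 1 (T.max' hT)) := card_le_card hT_sub
    _ = #s := by rw [Nat.card_Icc, Nat.add_sub_cancel, hs]
    _ ≤ #{v | k < d v} := card_le_card hs_sub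

lemma sum_Icc_le_sum_of_exists_card_eq
    (h : ∀ t ∈ Icc 1 n, ∃ s : Finset ι, #s = t ∧ ∀ v ∈ s, a t ≤ d v) :
    ∑ t ∈ Icc 1 n, a t ≤ ∑ v, d v := by
  set N := ∑ t ∈ Icc 1 n, a t + ∑ v, d v
  rw [sum_eq_sum_range_card_filter_lt _ _ (N := N)
      fun t ht => (single_le_sum (fun _ _ => Nat.zero_le _) ht).trans (Nat.le_add_right _ _),
    sum_eq_sum_range_card_filter_lt _ _ (N := N)
      fun v hv => (single_le_sum (fun _ _ => Nat.zero_le _) hv).trans (Nat.le_add_left _ _)]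
  exact sum_le_sum fun k _ => card_filter_lt_le_of_exists_card_eq h k

end DominatedSequence

theorem stmt4_general {V : Type*} [Fintype V] (n : ℕ)
    (G : SimpleGraph V) [DecidableRel G.Adj]
    (hstars : ∀ t, 1 ≤ t → t ≤ n → CopyIn (starForest t (n / t)) G) :
    (∀ t ∈ Finset.Icc 1 n, ∃ s : Finset V, s.card = t ∧
        ∀ v ∈ s, n / t - 1 ≤ G.degree v) ∧
      ∑ t ∈ Finset.Icc 1 n, (n / t - 1) ≤ 2 * G.edgeFinset.card := by
  have hdom : ∀ t ∈ Icc 1 n, ∃ s : Finset V, #s = t ∧ ∀ v ∈ s, n / t - 1 ≤ G.degree v := by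
    intro t ht
    obtain ⟨ht1, htn⟩ := mem_Icc.mp ht
    exact exists_card_eq_forall_le_degree_of_copyIn_starForest (Nat.div_pos htn ht1)
      (hstars t ht1 htn)
  refine ⟨hdom, ?_⟩
  rw [← G.sum_degrees_eq_twice_card_edges]
  exact sum_Icc_le_sum_of_exists_card_eq hdom

/-- If a graph `G` contains, for every `t ∈ {1, …, n}`, the forest of `t` disjoint
copies of the star `K_{1, ⌊n/t⌋ - 1}`, then for every `t` there are `t` vertices of
degree at least `⌊n/t⌋ - 1` (i.e. the sorted degree sequence dominates
`(n-1, ⌊n/2⌋-1, …)`), and hence `G` has at least `½ ∑_{t=1}^n (⌊n/t⌋ - 1)` edges. -/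
theorem stmt4 {V : Type*} [Fintype V] [DecidableEq V] (n : ℕ)
    (G : SimpleGraph V) [DecidableRel G.Adj]
    (hstars : ∀ t, 1 ≤ t → t ≤ n → CopyIn (starForest t (n / t)) G) :
    (∀ t ∈ Finset.Icc 1 n, ∃ s : Finset V, s.card = t ∧
        ∀ v ∈ s, n / t - 1 ≤ G.degree v) ∧
      ∑ t ∈ Finset.Icc 1 n, (n / t - 1) ≤ 2 * G.edgeFinset.card :=
  stmt4_general n G hstars
end

section
/- For any finite set $S \subset \mathbb{R}$ and any positive weight function $w : S \to \mathbb{R}^+$ with total weight $W := \sum_{y \in S} w(y)$, there exists a binary search tree $T$ with node set $S$ such that each $y \in S$ has depth $d_T(y) \le \log_2(W / w(y))$. -/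
/-- Binary trees with keys of type `α` (binary search trees when `IsSearch` holds). -/
inductive BST (α : Type) : Type
  | leaf : BST α
  | node : BST α → α → BST α → BST α

namespace BST

variable {α : Type} [LinearOrder α]

/-- The set of keys stored in a binary tree. -/
def keys : BST α → Set α
  | leaf => ∅
  | node l x r => keys l ∪ {x} ∪ keys r

/-- The binary search tree property: every key in the left subtree is smaller than
the root key, every key in the right subtree is larger, recursively. -/
def IsSearch : BST α → Prop
  | leaf => True
  | node l x r => (∀ y ∈ keys l, y < x) ∧ (∀ y ∈ keys r, x < y) ∧ IsSearch l ∧ IsSearch r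

/-- The signature of a key: the root-to-node search path, recorded as a list of
booleans (`false` = step to the left child, `true` = step to the right child). -/
def sig : BST α → α → List Bool
  | leaf, _ => []
  | node l x r, y => if y < x then false :: sig l y else if x < y then true :: sig r y else []

/-- The depth of a key in a binary search tree. -/
def depth (t : BST α) (y : α) : ℕ := (sig t y).length

/-- The subtree reached from the root by following a path of left/right steps. -/
def subtreeAt : BST α → List Bool → BST α
  | t, [] => t
  | leaf, _ :: _ => leaf
  | node l _ r, b :: p => subtreeAt (if b then r else l) p

/-- The node holding key `x` has a right child. -/
def HasRightChild (t : BST α) (x : α) : Prop :=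
  ∃ (l : BST α) (x' : α) (rl : BST α) (ry : α) (rr : BST α),
    subtreeAt t (sig t x) = node l x' (node rl ry rr)

end BST

open BST in
theorem bst_aux (w : ℝ → ℝ) : ∀ n (S : Finset ℝ), S.card ≤ n → (∀ y ∈ S, 0 < w y) →
    ∃ T : BST ℝ, T.IsSearch ∧ T.keys = ↑S ∧
      ∀ y ∈ S, w y * 2 ^ T.depth y ≤ ∑ z ∈ S, w z := by
  intro n
  induction n with
  | zero =>
    intro S hS _
    have hSe : S = ∅ := Finset.card_eq_zero.mp (Nat.le_zero.mp hS)
    subst hSe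
    exact ⟨BST.leaf, trivial, by simp [keys], by simp⟩
  | succ n ih =>
    intro S hS hw
    rcases S.eq_empty_or_nonempty with rfl | hne
    · exact ⟨BST.leaf, trivial, by simp [keys], by simp⟩
    set W := ∑ z ∈ S, w z with hWdef
    have hWpos : 0 < W := Finset.sum_pos hw hne
    set A := S.filter (fun x => W / 2 < ∑ z ∈ S.filter (· ≤ x), w z) with hA
    have hAne : A.Nonempty := by
      refine ⟨S.max' hne, ?_⟩
      rw [hA, Finset.mem_filter]
      refine ⟨S.max'_mem hne, ?_⟩
      have hfe : S.filter (· ≤ S.max' hne) = S :=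
        Finset.filter_true_of_mem (fun z hz => S.le_max' z hz)
      rw [hfe]; linarith
    set x := A.min' hAne with hx
    have hxA : x ∈ A := A.min'_mem hAne
    have hxS : x ∈ S := (Finset.mem_filter.mp hxA).1
    have hxsum : W / 2 < ∑ z ∈ S.filter (· ≤ x), w z := (Finset.mem_filter.mp hxA).2
    set L := S.filter (· < x) with hL
    set R := S.filter (x < ·) with hR
    have hLsum : ∑ z ∈ L, w z ≤ W / 2 := by
      by_contra h
      push_neg at h
      have hLne : L.Nonempty := by
        rcases L.eq_empty_or_nonempty with h0 | h0
        · rw [h0] at h; simp at h; linarith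
        · exact h0
      set x' := L.max' hLne with hx'
      have hx'L : x' ∈ L := L.max'_mem hLne
      have hx'S : x' ∈ S := (Finset.mem_filter.mp hx'L).1
      have hx'lt : x' < x := (Finset.mem_filter.mp hx'L).2
      have heq : S.filter (· ≤ x') = L := by
        ext z
        simp only [Finset.mem_filter, hL]
        constructor
        · rintro ⟨hz, hzx'⟩; exact ⟨hz, lt_of_le_of_lt hzx' hx'lt⟩
        · rintro ⟨hz, hzx⟩; exact ⟨hz, L.le_max' z (Finset.mem_filter.mpr ⟨hz, hzx⟩)⟩
      have hx'A : x' ∈ A := by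
        rw [hA, Finset.mem_filter]
        refine ⟨hx'S, ?_⟩
        rw [heq]; linarith
      have hmin := A.min'_le x' hx'A
      rw [← hx] at hmin
      linarith
    have hRsum : ∑ z ∈ R, w z ≤ W / 2 := by
      have hsplit := Finset.sum_filter_add_sum_filter_not S (· ≤ x) w
      have hrn : S.filter (fun z => ¬ z ≤ x) = R := by
        ext z; simp [hR, not_le]
      rw [hrn] at hsplit
      linarith
    have hLsub : L ⊆ S := Finset.filter_subset _ _
    have hRsub : R ⊆ S := Finset.filter_subset _ _
    have hLcard : L.card ≤ n := by
      have hss : L ⊂ S :=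
        (Finset.ssubset_iff_of_subset hLsub).mpr ⟨x, hxS, by simp [hL]⟩
      have := Finset.card_lt_card hss
      omega
    have hRcard : R.card ≤ n := by
      have hss : R ⊂ S :=
        (Finset.ssubset_iff_of_subset hRsub).mpr ⟨x, hxS, by simp [hR]⟩
      have := Finset.card_lt_card hss
      omega
    obtain ⟨TL, hTL1, hTL2, hTL3⟩ := ih L hLcard (fun y hy => hw y (hLsub hy))
    obtain ⟨TR, hTR1, hTR2, hTR3⟩ := ih R hRcard (fun y hy => hw y (hRsub hy))
    refine ⟨BST.node TL x TR, ?_, ?_, ?_⟩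
    · refine ⟨?_, ?_, hTL1, hTR1⟩
      · intro y hy
        rw [hTL2] at hy
        exact (Finset.mem_filter.mp hy).2
      · intro y hy
        rw [hTR2] at hy
        exact (Finset.mem_filter.mp hy).2
    · show keys TL ∪ {x} ∪ keys TR = ↑S
      rw [hTL2, hTR2]
      ext z
      simp only [Set.mem_union, Set.mem_singleton_iff, Finset.mem_coe, hL, hR,
        Finset.mem_filter]
      constructor
      · rintro ((⟨hz, _⟩ | rfl) | ⟨hz, _⟩)
        · exact hz
        · exact hxS
        · exact hz
      · intro hz
        rcases lt_trichotomy z x with h | h | h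
        · exact Or.inl (Or.inl ⟨hz, h⟩)
        · exact Or.inl (Or.inr h)
        · exact Or.inr ⟨hz, h⟩
    · intro y hy
      rcases lt_trichotomy y x with hlt | heq | hgt
      · have hyL : y ∈ L := Finset.mem_filter.mpr ⟨hy, hlt⟩
        have hd : depth (BST.node TL x TR) y = depth TL y + 1 := by
          simp [depth, sig, hlt]
        rw [hd]
        have h1 := hTL3 y hyL
        have h2 : w y * 2 ^ (depth TL y + 1) = (w y * 2 ^ depth TL y) * 2 := by ring
        rw [h2]
        linarith
      · have hd : depth (BST.node TL x TR) y = 0 := by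
          simp [depth, sig, heq, lt_irrefl]
        rw [hd]
        have h1 : w y ≤ W :=
          Finset.single_le_sum (fun z hz => le_of_lt (hw z hz)) hy
        simpa using h1
      · have hyR : y ∈ R := Finset.mem_filter.mpr ⟨hy, hgt⟩
        have hd : depth (BST.node TL x TR) y = depth TR y + 1 := by
          simp [depth, sig, hgt, asymm hgt]
        rw [hd]
        have h1 := hTR3 y hyR
        have h2 : w y * 2 ^ (depth TR y + 1) = (w y * 2 ^ depth TR y) * 2 := by ring
        rw [h2]
        linarith

open BST in
/-- Biased binary search trees: for any finite `S ⊂ ℝ` with positive weights `w`,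
there is a binary search tree on `S` in which each `y` has depth at most
`log₂(W / w y)`, where `W` is the total weight. -/
theorem stmt5 (S : Finset ℝ) (w : ℝ → ℝ) (hw : ∀ y ∈ S, 0 < w y) :
    ∃ T : BST ℝ, T.IsSearch ∧ T.keys = ↑S ∧
      ∀ y ∈ S, (T.depth y : ℝ) ≤ Real.logb 2 ((∑ z ∈ S, w z) / w y) := by
  obtain ⟨T, h1, h2, h3⟩ := bst_aux w S.card S le_rfl hw
  refine ⟨T, h1, h2, fun y hy => ?_⟩
  have hwy : 0 < w y := hw y hy
  have hb := h3 y hy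
  have hdiv : (2 : ℝ) ^ T.depth y ≤ (∑ z ∈ S, w z) / w y := by
    rw [le_div_iff₀ hwy]
    linarith [hb]
  have hpos : (0 : ℝ) < 2 ^ T.depth y := by positivity
  calc (T.depth y : ℝ) = Real.logb 2 (2 ^ T.depth y) := by
        rw [Real.logb_pow, Real.logb_self_eq_one (by norm_num)]
        ring
    _ ≤ Real.logb 2 ((∑ z ∈ S, w z) / w y) :=
        Real.logb_le_logb_of_le (by norm_num) hpos hdiv
end

section
/- For each binary string $\sigma$ and each integer $h$ with $|\sigma| \le h$, there exists a set $L(\sigma, h)$ of binary strings, each of length at most $h$, with $|L(\sigma, h)| \le h+1$, such that for every binary search tree $T$ of height at most $h$ and for every two consecutive nodes $x, y$ in the sorted order of $V(T)$ (with $x < y$), the signature $\sigma_T(y)$ belongs to $L(\sigma_T(x), h)$. -/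
namespace BSTaux
open BST

variable {α : Type} [LinearOrder α]

lemma mem_keys_node {l r : BST α} {a x : α} :
    x ∈ keys (node l a r) ↔ x ∈ keys l ∨ x = a ∨ x ∈ keys r := by
  simp [keys, Set.mem_union, or_assoc]; tauto

lemma sig_min : ∀ (t : BST α) (y : α), IsSearch t → y ∈ keys t →
    (∀ z ∈ keys t, y ≤ z) → ∃ k, sig t y = List.replicate k false := by
  intro t
  induction t with
  | leaf => intro y _ hy _; exact absurd hy (by simp [keys])
  | node l a r ihl ihr =>
    intro y hs hy hmin
    obtain ⟨h1, h2, hsl, hsr⟩ := hs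
    rcases lt_trichotomy y a with hlt | heq | hgt
    · have hyl : y ∈ keys l := by
        rcases mem_keys_node.1 hy with h | h | h
        · exact h
        · exact absurd h hlt.ne
        · exact absurd (h2 y h) (not_lt.2 hlt.le)
      obtain ⟨k, hk⟩ := ihl y hsl hyl (fun z hz => hmin z (mem_keys_node.2 (Or.inl hz)))
      exact ⟨k + 1, by simp [sig, hlt, hk, List.replicate_succ]⟩
    · exact ⟨0, by simp [sig, heq]⟩
    · have := hmin a (mem_keys_node.2 (Or.inr (Or.inl rfl)))
      exact absurd this (not_le.2 hgt)

lemma succ_sig : ∀ (t : BST α) (x y : α), IsSearch t → x ∈ keys t → y ∈ keys t →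
    x < y → (∀ z ∈ keys t, ¬(x < z ∧ z < y)) →
    (∃ i, i ≤ (sig t x).length ∧ sig t y = (sig t x).take i) ∨
    (∃ k, sig t y = sig t x ++ true :: List.replicate k false) := by
  intro t
  induction t with
  | leaf => intro x y _ hx; exact absurd hx (by simp [keys])
  | node l a r ihl ihr =>
    intro x y hs hx hy hxy hcons
    obtain ⟨h1, h2, hsl, hsr⟩ := hs
    rcases lt_trichotomy x a with hxa | hxa | hxa
    · rcases lt_trichotomy y a with hya | hya | hya
      · -- both in left subtree
        have hxl : x ∈ keys l := by
          rcases mem_keys_node.1 hx with h | h | h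
          · exact h
          · exact absurd h hxa.ne
          · exact absurd (h2 x h) (not_lt.2 hxa.le)
        have hyl : y ∈ keys l := by
          rcases mem_keys_node.1 hy with h | h | h
          · exact h
          · exact absurd h hya.ne
          · exact absurd (h2 y h) (not_lt.2 hya.le)
        have hcons' : ∀ z ∈ keys l, ¬(x < z ∧ z < y) :=
          fun z hz => hcons z (mem_keys_node.2 (Or.inl hz))
        rcases ihl x y hsl hxl hyl hxy hcons' with ⟨i, hi, h⟩ | ⟨k, h⟩
        · exact Or.inl ⟨i + 1, by simp [sig, hxa, hya, h, hi]⟩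
        · exact Or.inr ⟨k, by simp [sig, hxa, hya, h]⟩
      · -- y = a
        exact Or.inl ⟨0, by simp [sig, hya]⟩
      · -- x < a < y : contradiction
        exact absurd ⟨hxa, hya⟩ (hcons a (mem_keys_node.2 (Or.inr (Or.inl rfl))))
    · -- x = a : y is min of right subtree
      subst hxa
      have hyr : y ∈ keys r := by
        rcases mem_keys_node.1 hy with h | h | h
        · exact absurd (h1 y h) (not_lt.2 hxy.le)
        · exact absurd h hxy.ne'
        · exact h
      have hmin : ∀ z ∈ keys r, y ≤ z := by
        intro z hz
        by_contra hlt
        push_neg at hlt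
        exact hcons z (mem_keys_node.2 (Or.inr (Or.inr hz))) ⟨h2 z hz, hlt⟩
      obtain ⟨k, hk⟩ := sig_min r y hsr hyr hmin
      exact Or.inr ⟨k, by simp [sig, hxy, hxy.le, hk]⟩
    · -- a < x, so a < y too, both in right subtree
      have hya : a < y := hxa.trans hxy
      have hxr : x ∈ keys r := by
        rcases mem_keys_node.1 hx with h | h | h
        · exact absurd (h1 x h) (not_lt.2 hxa.le)
        · exact absurd h hxa.ne'
        · exact h
      have hyr : y ∈ keys r := by
        rcases mem_keys_node.1 hy with h | h | h
        · exact absurd (h1 y h) (not_lt.2 hya.le)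
        · exact absurd h hya.ne'
        · exact h
      have hcons' : ∀ z ∈ keys r, ¬(x < z ∧ z < y) :=
        fun z hz => hcons z (mem_keys_node.2 (Or.inr (Or.inr hz)))
      rcases ihr x y hsr hxr hyr hxy hcons' with ⟨i, hi, h⟩ | ⟨k, h⟩
      · exact Or.inl ⟨i + 1, by simp [sig, hxa, hya, not_lt.2 hxa.le, not_lt.2 hya.le, h, hi]⟩
      · exact Or.inr ⟨k, by simp [sig, hxa, hya, not_lt.2 hxa.le, not_lt.2 hya.le, h]⟩

end BSTaux

open BST in
/-- There is a universal function `L` assigning to each binary string `σ` and bound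
`h ≥ |σ|` a set `L(σ, h)` of at most `h + 1` strings, each of length at most `h`,
such that in any binary search tree of height at most `h`, the signature of the
successor of a key `x` always lies in `L(σ_T(x), h)`. -/
theorem stmt7 :
    ∃ L : List Bool → ℕ → Finset (List Bool),
      ∀ (σ : List Bool) (h : ℕ), σ.length ≤ h →
        (∀ s ∈ L σ h, s.length ≤ h) ∧ (L σ h).card ≤ h + 1 ∧
        ∀ T : BST ℝ, T.IsSearch → (∀ y ∈ T.keys, T.depth y ≤ h) →
          ∀ x y : ℝ, x ∈ T.keys → y ∈ T.keys → x < y →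
            (∀ z ∈ T.keys, ¬(x < z ∧ z < y)) →
            T.sig x = σ → T.sig y ∈ L σ h := by
  classical
  refine ⟨fun σ h =>
    ((Finset.range (σ.length + 1)).image (fun i => σ.take i)) ∪
    ((Finset.range (h - σ.length)).image (fun k => σ ++ true :: List.replicate k false)), ?_⟩
  intro σ h hσ
  refine ⟨?_, ?_, ?_⟩
  · intro s hs
    simp only [Finset.mem_union, Finset.mem_image, Finset.mem_range] at hs
    rcases hs with ⟨i, _, rfl⟩ | ⟨k, hk, rfl⟩
    · exact le_trans (by simp) hσ
    · simp only [List.length_append, List.length_cons, List.length_replicate]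
      omega
  · calc _ ≤ ((Finset.range (σ.length + 1)).image (fun i => σ.take i)).card +
        ((Finset.range (h - σ.length)).image
          (fun k => σ ++ true :: List.replicate k false)).card := Finset.card_union_le _ _
      _ ≤ (σ.length + 1) + (h - σ.length) := by
          gcongr <;> exact le_trans (Finset.card_image_le) (by simp)
      _ ≤ h + 1 := by omega
  · intro T hT hd x y hx hy hxy hcons hσx
    subst hσx
    rcases BSTaux.succ_sig T x y hT hx hy hxy hcons with ⟨i, hi, hsy⟩ | ⟨k, hsy⟩
    · exact Finset.mem_union_left _ (Finset.mem_image.2 ⟨i, Finset.mem_range.2 (by omega), hsy.symm⟩)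
    · have hdy := hd y hy
      rw [depth, hsy] at hdy
      simp only [List.length_append, List.length_cons, List.length_replicate] at hdy
      exact Finset.mem_union_right _
        (Finset.mem_image.2 ⟨k, Finset.mem_range.2 (by omega), hsy.symm⟩)
end

section
/- Let $G$ be an induced subgraph of $C_d$ and let $T$ be a binary search tree with $V(G) \subseteq V(T) \subseteq V(C_d)$. For $v \in V(G)$, let $x_T(v)$ be the node of $T$ of minimum $T$-depth that lies in $I(v)$ (the set of $B_d$-descendants of $v$). Then for every edge $vw \in E(G)$, either $x_T(v)$ is a $T$-ancestor of $x_T(w)$ or $x_T(w)$ is a $T$-ancestor of $x_T(v)$; consequently one of the signatures $\sigma_T(x_T(v))$, $\sigma_T(x_T(w))$ is a prefix of the other. -/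
/-- The set `I(v)` of `B_d`-descendants of `v` (including `v`). -/
def Idesc (d v : ℕ) : Set ℕ := {w | 1 ≤ w ∧ w ≤ 2 ^ (d + 1) - 1 ∧ bstAnc v w}

section Aux

/-- Two multiples of `k` within distance `< k` are equal. -/
lemma aux_pow_near_eq {k v w : ℕ} (hk : 0 < k) (hv : k ∣ v) (hw : k ∣ w)
    (h1 : v < w + k) (h2 : w < v + k) : v = w := by
  obtain ⟨a, rfl⟩ := hv
  obtain ⟨b, rfl⟩ := hw
  have h1' : a < b + 1 := by
    have : k * a < k * (b + 1) := by rw [Nat.mul_add, Nat.mul_one]; exact h1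
    exact Nat.lt_of_mul_lt_mul_left this
  have h2' : b < a + 1 := by
    have : k * b < k * (a + 1) := by rw [Nat.mul_add, Nat.mul_one]; exact h2
    exact Nat.lt_of_mul_lt_mul_left this
  have : a = b := by omega
  rw [this]

lemma aux_step {t s a b : ℕ} (hts : t ≤ s) (ha : 2 ^ t ∣ a) (hb : 2 ^ t ∣ b)
    (h : a < b + 2 ^ s) : a + 2 ^ t ≤ b + 2 ^ s := by
  obtain ⟨a', rfl⟩ := ha
  obtain ⟨b', rfl⟩ := hb
  have hs : (2 : ℕ) ^ s = 2 ^ t * 2 ^ (s - t) := by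
    rw [← pow_add]; congr 1; omega
  rw [hs] at h ⊢
  have h' : a' < b' + 2 ^ (s - t) := by
    have : 2 ^ t * a' < 2 ^ t * (b' + 2 ^ (s - t)) := by rw [Nat.mul_add]; exact h
    exact Nat.lt_of_mul_lt_mul_left this
  calc 2 ^ t * a' + 2 ^ t = 2 ^ t * (a' + 1) := by ring
    _ ≤ 2 ^ t * (b' + 2 ^ (s - t)) := Nat.mul_le_mul_left _ (by omega)
    _ = 2 ^ t * b' + 2 ^ t * 2 ^ (s - t) := by ring

lemma aux_final {v w u S E : ℕ} (h1 : w + E ≤ v + S) (h2 : v + E ≤ w + S) (h3 : S ≤ v)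
    (h4 : E ≤ w) (h5 : w - E < u) (h6 : u < w + E) : v - S < u ∧ u < v + S := by omega

lemma bstAnc_trans {v w u : ℕ} (hv : 1 ≤ v) (hw : 1 ≤ w) (hvw : v ≠ w)
    (h : bstAnc v w) (h' : bstAnc w u) : bstAnc v u := by
  obtain ⟨hl, hr⟩ := h
  obtain ⟨hl', hr'⟩ := h'
  have hdv : 2 ^ padicValNat 2 v ∣ v := pow_padicValNat_dvd
  have hdw : 2 ^ padicValNat 2 w ∣ w := pow_padicValNat_dvd
  have hSv : 2 ^ padicValNat 2 v ≤ v := Nat.le_of_dvd (by omega) hdv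
  have hEw : 2 ^ padicValNat 2 w ≤ w := Nat.le_of_dvd (by omega) hdw
  have hvlt : v < w + 2 ^ padicValNat 2 v := by omega
  have hnsw : ¬ 2 ^ padicValNat 2 v ∣ w := fun hd =>
    hvw (aux_pow_near_eq (by positivity) hdv hd hvlt hr)
  have hts : padicValNat 2 w < padicValNat 2 v := by
    by_contra hc
    exact hnsw (dvd_trans (pow_dvd_pow 2 (by omega)) hdw)
  have hdv' : 2 ^ padicValNat 2 w ∣ v := dvd_trans (pow_dvd_pow 2 (le_of_lt hts)) hdv
  have h1 := aux_step (le_of_lt hts) hdw hdv' hr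
  have h2 := aux_step (le_of_lt hts) hdv' hdw hvlt
  exact ⟨by omega, by omega⟩

lemma bstAnc_convex {v x y z : ℕ} (hx : bstAnc v x) (hy : bstAnc v y)
    (h1 : x ≤ z) (h2 : z ≤ y) : bstAnc v z :=
  ⟨lt_of_lt_of_le hx.1 h1, lt_of_le_of_lt h2 hy.2⟩

open BST in
lemma bst_tri {α : Type} [LinearOrder α] (t : BST α) (x y : α) (hxy : x < y) :
    t.IsSearch → x ∈ t.keys → y ∈ t.keys →
    (t.sig x <+: t.sig y) ∨ (t.sig y <+: t.sig x) ∨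
      ∃ z ∈ t.keys, x < z ∧ z < y ∧ t.depth z < t.depth x ∧ t.depth z < t.depth y := by
  induction t with
  | leaf => intro _ hx _; exact absurd hx (by simp [keys])
  | node l a r ihl ihr =>
    intro ht hx hy
    obtain ⟨hl, hr, hsl, hsr⟩ := ht
    rcases eq_or_ne x a with rfl | hxa
    · left
      simp [sig, lt_irrefl]
    rcases eq_or_ne y a with rfl | hya
    · right; left
      simp [sig, lt_irrefl]
    have hx' : x ∈ l.keys ∨ x ∈ r.keys := by
      rcases hx with (h | h) | h
      · exact Or.inl h
      · exact absurd h hxa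
      · exact Or.inr h
    have hy' : y ∈ l.keys ∨ y ∈ r.keys := by
      rcases hy with (h | h) | h
      · exact Or.inl h
      · exact absurd h hya
      · exact Or.inr h
    rcases hx' with hxl | hxr
    · have hxlt : x < a := hl x hxl
      rcases hy' with hyl | hyr
      · -- both left
        have hylt : y < a := hl y hyl
        rcases ihl hsl hxl hyl with p | p | ⟨z, hz, h1, h2, h3, h4⟩
        · obtain ⟨q, hq⟩ := p
          exact Or.inl ⟨q, by simp [sig, hxlt, hylt, hq]⟩
        · obtain ⟨q, hq⟩ := p
          exact Or.inr (Or.inl ⟨q, by simp [sig, hxlt, hylt, hq]⟩)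
        · have hza : z < a := lt_trans h2 hylt
          have dx : (node l a r).depth x = l.depth x + 1 := by simp [depth, sig, hxlt]
          have dy : (node l a r).depth y = l.depth y + 1 := by simp [depth, sig, hylt]
          have dz : (node l a r).depth z = l.depth z + 1 := by simp [depth, sig, hza]
          exact Or.inr (Or.inr ⟨z, Or.inl (Or.inl hz), h1, h2, by omega, by omega⟩)
      · -- x left, y right
        have hylt : a < y := hr y hyr
        have hny : ¬ y < a := not_lt_of_gt hylt
        right; right
        refine ⟨a, Or.inl (Or.inr rfl), hxlt, hylt, ?_, ?_⟩ <;>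
          simp [depth, sig, hxlt, hylt, lt_irrefl, hny]
    · have hxlt : a < x := hr x hxr
      have hnx : ¬ x < a := not_lt_of_gt hxlt
      rcases hy' with hyl | hyr
      · exact absurd hxy (not_lt_of_gt (lt_trans (hl y hyl) hxlt))
      · -- both right
        have hylt : a < y := hr y hyr
        have hny : ¬ y < a := not_lt_of_gt hylt
        rcases ihr hsr hxr hyr with p | p | ⟨z, hz, h1, h2, h3, h4⟩
        · obtain ⟨q, hq⟩ := p
          exact Or.inl ⟨q, by simp [sig, hnx, hny, hxlt, hylt, hq]⟩
        · obtain ⟨q, hq⟩ := p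
          exact Or.inr (Or.inl ⟨q, by simp [sig, hnx, hny, hxlt, hylt, hq]⟩)
        · have hza : a < z := lt_trans hxlt h1
          have hnz : ¬ z < a := not_lt_of_gt hza
          have dx : (node l a r).depth x = r.depth x + 1 := by simp [depth, sig, hnx, hxlt]
          have dy : (node l a r).depth y = r.depth y + 1 := by simp [depth, sig, hny, hylt]
          have dz : (node l a r).depth z = r.depth z + 1 := by simp [depth, sig, hnz, hza]
          exact Or.inr (Or.inr ⟨z, Or.inr hz, h1, h2, by omega, by omega⟩)

open BST in
lemma stmt9_key (d : ℕ) (T : BST ℕ) (hT : T.IsSearch)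
    (hTV : T.keys ⊆ {u : ℕ | 1 ≤ u ∧ u ≤ 2 ^ (d + 1) - 1})
    (v w xv xw : ℕ) (hv1 : 1 ≤ v) (hw1 : 1 ≤ w) (hne : v ≠ w) (hvw : bstAnc v w)
    (hxv : xv ∈ T.keys ∩ Idesc d v)
    (hxvmin : ∀ z ∈ T.keys ∩ Idesc d v, T.depth xv ≤ T.depth z)
    (hxw : xw ∈ T.keys ∩ Idesc d w) :
    (T.sig xv <+: T.sig xw) ∨ (T.sig xw <+: T.sig xv) := by
  obtain ⟨hxvk, hv1', hv2', hvanc⟩ := hxv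
  obtain ⟨hxwk, hw1', hw2', hwanc⟩ := hxw
  have hxwIv : bstAnc v xw := bstAnc_trans hv1 hw1 hne hvw hwanc
  rcases lt_trichotomy xv xw with h | h | h
  · rcases bst_tri T xv xw h hT hxvk hxwk with p | p | ⟨z, hzk, h1, h2, hd1, _⟩
    · exact Or.inl p
    · exact Or.inr p
    · exfalso
      have hz : z ∈ T.keys ∩ Idesc d v :=
        ⟨hzk, (hTV hzk).1, (hTV hzk).2,
          bstAnc_convex hvanc hxwIv (le_of_lt h1) (le_of_lt h2)⟩
      exact absurd (hxvmin z hz) (by omega)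
  · exact Or.inl (by rw [h])
  · rcases bst_tri T xw xv h hT hxwk hxvk with p | p | ⟨z, hzk, h1, h2, _, hd2⟩
    · exact Or.inr p
    · exact Or.inl p
    · exfalso
      have hz : z ∈ T.keys ∩ Idesc d v :=
        ⟨hzk, (hTV hzk).1, (hTV hzk).2,
          bstAnc_convex hxwIv hvanc (le_of_lt h1) (le_of_lt h2)⟩
      exact absurd (hxvmin z hz) (by omega)

end Aux

open BST in
/-- Let `G` be an induced subgraph of `C_d` (vertex set `Vg`) and `T` a binary
search tree with `V(G) ⊆ V(T) ⊆ V(C_d)`.  For `v ∈ V(G)` let `x_T(v)` be a node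
of `T` of minimum `T`-depth lying in `I(v)`.  Then for every edge `vw` of `G`,
one of the signatures `σ_T(x_T(v))`, `σ_T(x_T(w))` is a prefix of the other
(equivalently, one of `x_T(v)`, `x_T(w)` is a `T`-ancestor of the other). -/
theorem stmt9 (d : ℕ) (T : BST ℕ) (hT : T.IsSearch)
    (hTV : T.keys ⊆ {u : ℕ | 1 ≤ u ∧ u ≤ 2 ^ (d + 1) - 1})
    (Vg : Set ℕ) (hVg : Vg ⊆ T.keys)
    (v w : ℕ) (hv : v ∈ Vg) (hw : w ∈ Vg)
    (hadj : v ≠ w ∧ (bstAnc v w ∨ bstAnc w v))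
    (xv xw : ℕ)
    (hxv : xv ∈ T.keys ∩ Idesc d v)
    (hxvmin : ∀ z ∈ T.keys ∩ Idesc d v, T.depth xv ≤ T.depth z)
    (hxw : xw ∈ T.keys ∩ Idesc d w)
    (hxwmin : ∀ z ∈ T.keys ∩ Idesc d w, T.depth xw ≤ T.depth z) :
    (T.sig xv <+: T.sig xw) ∨ (T.sig xw <+: T.sig xv) := by
  obtain ⟨hne, hc | hc⟩ := hadj
  · exact stmt9_key d T hT hTV v w xv xw (hTV (hVg hv)).1 (hTV (hVg hw)).1 hne hc hxv hxvmin hxw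
  · exact (stmt9_key d T hT hTV w v xw xv (hTV (hVg hw)).1 (hTV (hVg hv)).1 hne.symm hc
      hxw hxwmin hxv).symm
end

section
/- Every $n$-vertex graph of treewidth at most $t$ has pathwidth at most $(t+1)\lfloor \log_3(2n+1) + 1 \rfloor - 1$. -/
/-- `G` has a tree-decomposition of width at most `t`: a tree `T` with bags
`X i ⊆ V(G)` of size at most `t + 1`, every edge of `G` inside some bag, and for
every vertex `v` the set of nodes whose bag contains `v` inducing a nonempty
subtree of `T`. -/
def HasTreeDecompWidth {V : Type} (G : SimpleGraph V) (t : ℕ) : Prop :=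
  ∃ (ι : Type) (T : SimpleGraph ι) (X : ι → Finset V),
    T.Connected ∧ T.IsAcyclic ∧
    (∀ u v : V, G.Adj u v → ∃ i, u ∈ X i ∧ v ∈ X i) ∧
    (∀ v : V, (T.induce {i | v ∈ X i}).Connected) ∧
    (∀ i, (X i).card ≤ t + 1)

/-- `G` has a path-decomposition of width at most `k`: a sequence of bags of size
at most `k + 1` covering all edges, such that every vertex appears in a nonempty
contiguous interval of bags. -/
def HasPathDecompWidth {V : Type} (G : SimpleGraph V) (k : ℕ) : Prop :=
  ∃ (m : ℕ) (X : Fin (m + 1) → Finset V),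
    (∀ u v : V, G.Adj u v → ∃ i, u ∈ X i ∧ v ∈ X i) ∧
    (∀ v : V, ∃ a b : Fin (m + 1), a ≤ b ∧ ∀ i, v ∈ X i ↔ a ≤ i ∧ i ≤ b) ∧
    (∀ i, (X i).card ≤ k + 1)

/-!
Restrict the tree-decomposition `(T, X)` to a finite subtree `A` that still covers every vertex
and edge, and charge each vertex outside a set `R` (the vertices already present in every bag) to
one node whose bag contains it. A centroid argument gives a path `P` in `A` such that every
component of `A - P` carries at most a third of the charge. Each component hanging at `j ∈ P` is
decomposed recursively with `R ∪ X j` in place of `R`, and `X j` is added to each of its bags.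
Listing these blocks along `P`, each followed by `X j`, gives a path-decomposition: a vertex lying
in a bag on `P` lies in the bags of a subpath of `P`, and any other vertex lies in the bags of a
single component. Each level of the recursion adds at most `t + 1` vertices outside `R` to a bag,
and `⌊log₃(2n + 1)⌋ + 1` levels suffice because `2m + 1 ≤ 3 ^ (d + 1)` and `3k ≤ m` give
`2k + 1 ≤ 3 ^ d`.
-/

namespace List

variable {α β : Type*} {p : α → Prop} {l l' : List α}

def Contiguous (p : α → Prop) (l : List α) : Prop :=
  ∃ pre mid post, l = pre ++ mid ++ post ∧
    (∀ a ∈ pre, ¬ p a) ∧ (∀ a ∈ mid, p a) ∧ (∀ a ∈ post, ¬ p a)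

lemma contiguous_of_forall_not (h : ∀ a ∈ l, ¬ p a) : l.Contiguous p :=
  ⟨l, [], [], by simp, h, by simp, by simp⟩

lemma Contiguous.append_of_forall_not (hl : l.Contiguous p) (h : ∀ a ∈ l', ¬ p a) :
    (l ++ l').Contiguous p := by
  obtain ⟨pre, mid, post, rfl, hpre, hmid, hpost⟩ := hl
  refine ⟨pre, mid, post ++ l', by simp, hpre, hmid, ?_⟩
  simp only [mem_append]
  rintro a (ha | ha)
  exacts [hpost a ha, h a ha]

lemma Contiguous.append_of_forall_not_left (hl : l.Contiguous p) (h : ∀ a ∈ l', ¬ p a) :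
    (l' ++ l).Contiguous p := by
  obtain ⟨pre, mid, post, rfl, hpre, hmid, hpost⟩ := hl
  refine ⟨l' ++ pre, mid, post, by simp, ?_, hmid, hpost⟩
  simp only [mem_append]
  rintro a (ha | ha)
  exacts [h a ha, hpre a ha]

lemma Contiguous.map {p : β → Prop} (f : α → β) (hl : l.Contiguous (p ∘ f)) :
    (l.map f).Contiguous p := by
  obtain ⟨pre, mid, post, rfl, hpre, hmid, hpost⟩ := hl
  exact ⟨pre.map f, mid.map f, post.map f, by simp, by simpa using hpre, by simpa using hmid,
    by simpa using hpost⟩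

lemma Contiguous.congr {q : α → Prop} (hl : l.Contiguous p) (h : ∀ a ∈ l, p a ↔ q a) :
    l.Contiguous q := by
  obtain ⟨pre, mid, post, rfl, hpre, hmid, hpost⟩ := hl
  refine ⟨pre, mid, post, rfl, fun a ha => ?_, fun a ha => ?_, fun a ha => ?_⟩
  · exact (h a (by simp [ha])).not.1 (hpre a ha)
  · exact (h a (by simp [ha])).1 (hmid a ha)
  · exact (h a (by simp [ha])).not.1 (hpost a ha)

lemma Contiguous.cons {a : α} (hl : l.Contiguous p)
    (h : p a → (∃ b ∈ l, p b) → ∀ b ∈ l.head?, p b) : (a :: l).Contiguous p := by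
  by_cases ha : p a
  swap
  · exact hl.append_of_forall_not_left (l' := [a]) (by simpa using ha)
  by_cases hex : ∃ b ∈ l, p b
  swap
  · push Not at hex
    exact ⟨[], [a], l, by simp, by simp, by simpa using ha, hex⟩
  obtain ⟨pre, mid, post, rfl, hpre, hmid, hpost⟩ := hl
  obtain rfl : pre = [] := by
    cases pre with
    | nil => rfl
    | cons b pre => exact absurd (h ha hex b (by simp)) (hpre b (by simp))
  exact ⟨[], a :: mid, post, by simp, by simp, by simpa [ha] using hmid, hpost⟩

lemma contiguous_flatten_of_pairwise {Ls : List (List α)} (h : ∀ l ∈ Ls, l.Contiguous p)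
    (hpw : Ls.Pairwise fun l l' => (∃ a ∈ l, p a) → ∀ a ∈ l', ¬ p a) :
    Ls.flatten.Contiguous p := by
  induction Ls with
  | nil => exact contiguous_of_forall_not (by simp)
  | cons l Ls ih =>
    rw [pairwise_cons] at hpw
    rw [flatten_cons]
    by_cases hl : ∃ a ∈ l, p a
    · refine (h l mem_cons_self).append_of_forall_not fun a ha => ?_
      obtain ⟨l', hl', hal'⟩ := mem_flatten.1 ha
      exact hpw.1 l' hl' hl a hal'
    · push Not at hl
      exact (ih (fun l' hl' => h l' (mem_cons_of_mem _ hl')) hpw.2).append_of_forall_not_left hl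

lemma Contiguous.flatten {Ls : List (List α)} (h : Ls.Contiguous fun l => ∃ a ∈ l, p a)
    (hfull : ∀ l ∈ Ls, (∃ a ∈ l, p a) → ∀ a ∈ l, p a) : Ls.flatten.Contiguous p := by
  obtain ⟨pre, mid, post, rfl, hpre, hmid, hpost⟩ := h
  refine ⟨pre.flatten, mid.flatten, post.flatten, by simp, ?_, ?_, ?_⟩
  · simp only [mem_flatten]
    rintro a ⟨l, hl, ha⟩ hpa
    exact hpre l hl ⟨a, ha, hpa⟩
  · simp only [mem_flatten]
    rintro a ⟨l, hl, ha⟩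
    exact hfull l (by simp [hl]) (hmid l hl) a ha
  · simp only [mem_flatten]
    rintro a ⟨l, hl, ha⟩ hpa
    exact hpost l hl ⟨a, ha, hpa⟩

lemma Contiguous.exists_interval (hl : l.Contiguous p) (hex : ∃ a ∈ l, p a) :
    ∃ i j, i ≤ j ∧ j < l.length ∧ ∀ (k : ℕ) (hk : k < l.length), p l[k] ↔ i ≤ k ∧ k ≤ j := by
  obtain ⟨pre, mid, post, rfl, hpre, hmid, hpost⟩ := hl
  have hmid_pos : 0 < mid.length := by
    obtain ⟨a, ha, hpa⟩ := hex
    rcases mem_append.1 ha with ha | ha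
    · rcases mem_append.1 ha with ha | ha
      · exact absurd hpa (hpre a ha)
      · exact length_pos_of_mem ha
    · exact absurd hpa (hpost a ha)
  refine ⟨pre.length, pre.length + mid.length - 1, by omega, by simp; omega, fun k hk => ?_⟩
  have hlen : (pre ++ mid).length = pre.length + mid.length := length_append
  by_cases h₁₂ : k < (pre ++ mid).length
  · rw [getElem_append_left h₁₂]
    by_cases h₁ : k < pre.length
    · rw [getElem_append_left h₁]
      exact iff_of_false (hpre _ (getElem_mem h₁)) (by omega)
    · rw [getElem_append_right (by omega)]
      exact iff_of_true (hmid _ (getElem_mem _)) (by omega)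
  · rw [getElem_append_right (by omega)]
    exact iff_of_false (hpost _ (getElem_mem _)) (by omega)

end List

lemma hasPathDecompWidth_of_list {V : Type} {G : SimpleGraph V} {k : ℕ} (L : List (Finset V))
    (hedge : ∀ u v, G.Adj u v → ∃ s ∈ L, u ∈ s ∧ v ∈ s) (hcover : ∀ v, ∃ s ∈ L, v ∈ s)
    (hcont : ∀ v, L.Contiguous (v ∈ ·)) (hcard : ∀ s ∈ L, s.card ≤ k + 1) :
    HasPathDecompWidth G k := by
  cases L with
  | nil =>
    exact ⟨0, fun _ => ∅, fun u => absurd (hcover u) (by simp),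
      fun v => absurd (hcover v) (by simp), by simp⟩
  | cons s₀ L =>
    refine ⟨L.length, fun i => (s₀ :: L)[i.1], fun u v huv => ?_, fun v => ?_,
      fun i => hcard _ (List.getElem_mem _)⟩
    · obtain ⟨s, hs, hus, hvs⟩ := hedge u v huv
      obtain ⟨n, hn, rfl⟩ := List.getElem_of_mem hs
      exact ⟨⟨n, hn⟩, hus, hvs⟩
    · obtain ⟨a, b, hab, hb, hiff⟩ := (hcont v).exists_interval (hcover v)
      exact ⟨⟨a, by simp at hb; omega⟩, ⟨b, hb⟩, hab, fun i => hiff i i.2⟩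

section PathDecompOn

open Classical

variable {ι V : Type*} {X : ι → Finset V} {A : Finset ι} {R : Finset V} {k : ℕ}

structure IsPathDecompOn (X : ι → Finset V) (A : Finset ι) (R : Finset V) (k : ℕ)
    (L : List (Finset V)) : Prop where
  exists_superset : ∀ i ∈ A, ∃ s ∈ L, X i ⊆ s
  subset_biUnion : ∀ s ∈ L, s ⊆ A.biUnion X
  card_sdiff_le : ∀ s ∈ L, (s \ R).card ≤ k
  contiguous : ∀ v, L.Contiguous (v ∈ ·)

lemma isPathDecompOn_singleton (h : A.biUnion X ⊆ R) : IsPathDecompOn X A R k [A.biUnion X] where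
  exists_superset i hi := ⟨_, List.mem_singleton_self _, Finset.subset_biUnion_of_mem X hi⟩
  subset_biUnion s hs := List.mem_singleton.1 hs ▸ subset_rfl
  card_sdiff_le s hs := by simp [List.mem_singleton.1 hs, Finset.sdiff_eq_empty_iff_subset.2 h]
  contiguous _ := (List.contiguous_of_forall_not (l := []) (by simp)).cons (by simp)

/-- Charging each vertex of `U` to one node whose bag contains it. -/
lemma exists_weight_sum_eq_card {U : Finset V} (hU : U ⊆ A.biUnion X) :
    ∃ w : ι → ℕ, ∑ i ∈ A, w i = U.card ∧
      ∀ C ⊆ A, (U.filter fun v => ∀ i ∈ A \ C, v ∉ X i).card ≤ ∑ i ∈ C, w i := by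
  rcases U.eq_empty_or_nonempty with rfl | ⟨v₀, hv₀⟩
  · exact ⟨0, by simp, by simp⟩
  have : Nonempty ι := ⟨(Finset.mem_biUnion.1 (hU hv₀)).choose⟩
  have : ∀ v ∈ U, ∃ i ∈ A, v ∈ X i := fun v hv => Finset.mem_biUnion.1 (hU hv)
  choose! rep hrepA hrep using this
  refine ⟨fun i => (U.filter (rep · = i)).card, (Finset.card_eq_sum_card_fiberwise hrepA).symm,
    fun C hC => ?_⟩
  calc (U.filter fun v => ∀ i ∈ A \ C, v ∉ X i).card ≤ (U.filter (rep · ∈ C)).card := by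
        refine Finset.card_le_card fun v hv => ?_
        rw [Finset.mem_filter] at hv ⊢
        exact ⟨hv.1, by_contra fun h =>
          hv.2 _ (Finset.mem_sdiff.2 ⟨hrepA v hv.1, h⟩) (hrep v hv.1)⟩
    _ = ∑ i ∈ C, ((U.filter (rep · ∈ C)).filter (rep · = i)).card :=
        Finset.card_eq_sum_card_fiberwise fun v hv => (Finset.mem_filter.1 hv).2
    _ ≤ ∑ i ∈ C, (U.filter (rep · = i)).card :=
        Finset.sum_le_sum fun i _ => Finset.card_le_card
          (Finset.filter_subset_filter _ (Finset.filter_subset _ _))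

end PathDecompOn

namespace SimpleGraph

lemma Walk.IsPath.append {V : Type*} {G : SimpleGraph V} {u v w : V} {p : G.Walk u v}
    {q : G.Walk v w} (hp : p.IsPath) (hq : q.IsPath) (h : ∀ x ∈ p.support, x ∈ q.support → x = v) :
    (p.append q).IsPath := by
  rw [Walk.isPath_def, Walk.support_append]
  refine hp.support_nodup.append (hq.support_nodup.sublist (List.tail_sublist _)) ?_
  intro x hxp hxq
  have hnd := hq.support_nodup
  rw [← Walk.cons_tail_support q] at hnd
  exact (List.nodup_cons.1 hnd).1 (h x hxp (List.mem_of_mem_tail hxq) ▸ hxq)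

namespace IsTree

open Classical

variable {ι V : Type*} {T : SimpleGraph ι} (hT : T.IsTree)

/-! ### Segments -/

noncomputable def path (i j : ι) : T.Walk i j := (hT.existsUnique_path i j).exists.choose

noncomputable def segment (i j : ι) : Finset ι := (hT.path i j).support.toFinset

def IsSubtree (S : Set ι) : Prop := ∀ ⦃a⦄, a ∈ S → ∀ ⦃b⦄, b ∈ S → ∀ x ∈ hT.segment a b, x ∈ S

section Segment

variable {hT} {i j k c x : ι}

lemma isPath_path (i j : ι) : (hT.path i j).IsPath := (hT.existsUnique_path i j).exists.choose_spec

lemma eq_path {p : T.Walk i j} (hp : p.IsPath) : p = hT.path i j :=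
  (hT.existsUnique_path i j).unique hp (isPath_path i j)

lemma mem_segment : x ∈ hT.segment i j ↔ x ∈ (hT.path i j).support := List.mem_toFinset

lemma segment_eq_of_isPath {p : T.Walk i j} (hp : p.IsPath) :
    hT.segment i j = p.support.toFinset := by
  rw [segment, ← eq_path hp]

@[simp] lemma left_mem_segment (i j : ι) : i ∈ hT.segment i j :=
  mem_segment.2 (Walk.start_mem_support _)

@[simp] lemma right_mem_segment (i j : ι) : j ∈ hT.segment i j :=
  mem_segment.2 (Walk.end_mem_support _)

lemma path_self (i : ι) : hT.path i i = .nil := (eq_path .nil).symm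

@[simp] lemma segment_self (i : ι) : hT.segment i i = {i} := by
  rw [segment, path_self]
  rfl

lemma segment_comm (i j : ι) : hT.segment i j = hT.segment j i := by
  rw [segment_eq_of_isPath (isPath_path j i).reverse, Walk.support_reverse,
    List.toFinset_reverse, segment]

lemma path_append_of_mem (h : j ∈ hT.segment i k) :
    (hT.path i j).append (hT.path j k) = hT.path i k := by
  rw [mem_segment] at h
  rw [← eq_path ((isPath_path i k).takeUntil h), ← eq_path ((isPath_path i k).dropUntil h),
    Walk.take_spec]

lemma segment_eq_union_of_mem (h : j ∈ hT.segment i k) :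
    hT.segment i k = hT.segment i j ∪ hT.segment j k := by
  ext x
  rw [Finset.mem_union, mem_segment, mem_segment, mem_segment, ← path_append_of_mem h,
    Walk.mem_support_append_iff]

lemma segment_subset_left (h : j ∈ hT.segment i k) : hT.segment i j ⊆ hT.segment i k :=
  segment_eq_union_of_mem h ▸ Finset.subset_union_left

lemma segment_subset_right (h : j ∈ hT.segment i k) : hT.segment j k ⊆ hT.segment i k :=
  segment_eq_union_of_mem h ▸ Finset.subset_union_right

lemma length_path_add_of_mem (h : j ∈ hT.segment i k) :
    (hT.path i j).length + (hT.path j k).length = (hT.path i k).length := by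
  rw [← path_append_of_mem h, Walk.length_append]

lemma segment_subset_union (i j k : ι) : hT.segment i k ⊆ hT.segment i j ∪ hT.segment j k := by
  intro x hx
  rw [segment_eq_of_isPath ((hT.path i j).append (hT.path j k)).bypass_isPath,
    List.mem_toFinset] at hx
  have := Walk.support_bypass_subset_support _ hx
  rwa [Walk.mem_support_append_iff, ← mem_segment, ← mem_segment, ← Finset.mem_union] at this

lemma segment_eq_union_of_inter_subset (h : hT.segment i j ∩ hT.segment j k ⊆ {j}) :
    hT.segment i k = hT.segment i j ∪ hT.segment j k := by
  have hpath := (isPath_path i j).append (isPath_path j k) fun x hi hk =>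
    Finset.mem_singleton.1 (h (Finset.mem_inter.2 ⟨mem_segment.2 hi, mem_segment.2 hk⟩))
  ext x
  rw [segment_eq_of_isPath hpath, List.mem_toFinset, Walk.mem_support_append_iff,
    Finset.mem_union, mem_segment, mem_segment]

lemma isSubtree_segment (i j : ι) : hT.IsSubtree (hT.segment i j : Set ι) := by
  intro a ha b hb x hx
  have ha' : a ∈ hT.segment j i := segment_comm i j ▸ ha
  rcases Finset.mem_union.1 (segment_subset_union a i b hx) with hx | hx
  · have := segment_subset_right ha' hx
    rwa [segment_comm] at this
  · exact segment_subset_left hb hx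

lemma path_cons (h : T.Adj i c) (hi : i ∉ hT.segment c k) :
    hT.path i k = .cons h (hT.path c k) :=
  (eq_path ((Walk.cons_isPath_iff h _).2 ⟨isPath_path c k, mem_segment.not.1 hi⟩)).symm

lemma segment_cons (h : T.Adj i c) (hi : i ∉ hT.segment c k) :
    hT.segment i k = insert i (hT.segment c k) := by
  rw [segment, path_cons h hi, Walk.support_cons, List.toFinset_cons, segment]

lemma segment_of_adj (h : T.Adj i c) : hT.segment i c = {i, c} := by
  rw [segment_cons h (by simpa using h.ne), segment_self]

lemma exists_adj_segment_cons (hik : i ≠ k) :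
    ∃ c, T.Adj i c ∧ i ∉ hT.segment c k ∧ hT.segment i k = insert i (hT.segment c k) := by
  obtain ⟨c, h, p, hp⟩ := Walk.exists_eq_cons_of_ne hik (hT.path i k)
  have hpath : (Walk.cons h p).IsPath := hp ▸ isPath_path i k
  obtain ⟨hp', hi⟩ := (Walk.cons_isPath_iff h p).1 hpath
  have hi' : i ∉ hT.segment c k := by rwa [mem_segment, ← eq_path hp']
  exact ⟨c, h, hi', segment_cons h hi'⟩

lemma IsSubtree.contiguous_support {S : Set ι} (hS : hT.IsSubtree S) {a b : ι} {ω : T.Walk a b}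
    (hω : ω.IsPath) : ω.support.Contiguous (· ∈ S) := by
  induction ω with
  | nil => exact (List.contiguous_of_forall_not (l := []) (by simp)).cons (by simp)
  | @cons a c b h ω ih =>
    rw [Walk.support_cons]
    refine (ih hω.of_cons).cons fun ha ⟨x, hx, hxS⟩ c' hc' => ?_
    obtain rfl : c' = c := by
      rw [← Walk.cons_tail_support, List.head?_cons, Option.mem_some_iff] at hc'
      exact hc'.symm
    have hcx : hT.segment c' x ⊆ ω.support.toFinset := by
      rw [segment_eq_of_isPath (hω.of_cons.takeUntil hx)]
      intro y hy
      rw [List.mem_toFinset] at hy ⊢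
      exact Walk.support_takeUntil_subset_support _ _ hy
    have hax : a ∉ hT.segment c' x := fun h' =>
      ((Walk.cons_isPath_iff h ω).1 hω).2 (List.mem_toFinset.1 (hcx h'))
    exact hS ha hxS c' (segment_cons h hax ▸ Finset.mem_insert_of_mem (left_mem_segment c' x))

end Segment

lemma isSubtree_of_preconnected_induce {S : Set ι}
    (h : (T.induce S).Preconnected) : hT.IsSubtree S := by
  intro a ha b hb x hx
  obtain ⟨ω⟩ := h ⟨a, ha⟩ ⟨b, hb⟩
  obtain ⟨ω', hω'⟩ : ∃ ω' : T.Walk a b, ∀ y ∈ ω'.support, y ∈ S := by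
    refine ⟨ω.map (Embedding.induce S).toHom, fun y hy => ?_⟩
    have h : y ∈ (ω.map (Embedding.induce S).toHom).support := hy
    rw [Walk.support_map, List.mem_map] at h
    obtain ⟨y, -, rfl⟩ := h
    exact y.2
  rw [segment_eq_of_isPath ω'.bypass_isPath, List.mem_toFinset] at hx
  exact hω' x (Walk.support_bypass_subset_support _ hx)

lemma exists_isSubtree_superset (F : Finset ι) :
    ∃ A : Finset ι, F ⊆ A ∧ hT.IsSubtree A := by
  refine ⟨F.biUnion fun a => F.biUnion fun b => hT.segment a b,
    fun a ha => Finset.mem_biUnion.2 ⟨a, ha, Finset.mem_biUnion.2 ⟨a, ha, by simp⟩⟩, ?_⟩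
  have mem : ∀ {x s₁ s₂}, s₁ ∈ F → s₂ ∈ F → x ∈ hT.segment s₁ s₂ →
      x ∈ F.biUnion fun a => F.biUnion fun b => hT.segment a b := fun h₁ h₂ hx =>
    Finset.mem_biUnion.2 ⟨_, h₁, Finset.mem_biUnion.2 ⟨_, h₂, hx⟩⟩
  intro a ha b hb x hx
  simp only [Finset.coe_biUnion, Finset.mem_coe, Set.mem_iUnion, exists_prop] at ha hb
  obtain ⟨s₁, hs₁, s₂, hs₂, ha⟩ := ha
  obtain ⟨s₃, hs₃, s₄, hs₄, hb⟩ := hb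
  rcases Finset.mem_union.1 (segment_subset_union a s₁ b hx) with hx | hx
  · rw [segment_comm] at ha
    exact mem hs₂ hs₁ (segment_subset_right ha hx)
  rcases Finset.mem_union.1 (segment_subset_union s₁ s₃ b hx) with hx | hx
  · exact mem hs₁ hs₃ hx
  · exact mem hs₃ hs₄ (segment_subset_left hb hx)

/-! ### Components off a subtree -/

noncomputable def nearest (S : Finset ι) (y : ι) : ι :=
  if h : ∃ a, hT.segment y a ∩ S = {a} then h.choose else y

noncomputable def component (A S : Finset ι) (y : ι) : Finset ι :=
  A.filter fun z => Disjoint (hT.segment y z) S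

section Component

variable {hT} {A S S' Q : Finset ι} {a x y z : ι}

lemma exists_segment_inter_eq (hx : x ∈ S) :
    ∃ a ∈ hT.segment y x, hT.segment y a ∩ S = {a} := by
  obtain ⟨a, ha, hmin⟩ := Finset.exists_min_image (hT.segment y x ∩ S)
    (fun a => (hT.path y a).length) ⟨x, Finset.mem_inter.2 ⟨right_mem_segment _ _, hx⟩⟩
  rw [Finset.mem_inter] at ha
  refine ⟨a, ha.1, Finset.eq_singleton_iff_unique_mem.2 ⟨Finset.mem_inter.2 ⟨by simp, ha.2⟩, ?_⟩⟩
  intro b hb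
  rw [Finset.mem_inter] at hb
  have hlen := length_path_add_of_mem hb.1
  have := hmin b (Finset.mem_inter.2 ⟨segment_subset_left ha.1 hb.1, hb.2⟩)
  exact Walk.eq_of_length_eq_zero (by omega : (hT.path b a).length = 0)

lemma eq_of_segment_inter_eq (hS : hT.IsSubtree S) {a a' : ι}
    (ha : hT.segment y a ∩ S = {a}) (ha' : hT.segment y a' ∩ S = {a'}) : a = a' := by
  have haS : a ∈ S := (Finset.mem_inter.1 (ha ▸ Finset.mem_singleton_self a)).2
  have ha'S : a' ∈ S := (Finset.mem_inter.1 (ha' ▸ Finset.mem_singleton_self a')).2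
  have hjoin : hT.segment y a' = hT.segment y a ∪ hT.segment a a' := by
    refine segment_eq_union_of_inter_subset fun x hx => ?_
    rw [Finset.mem_inter] at hx
    exact ha ▸ Finset.mem_inter.2 ⟨hx.1, hS haS ha'S x hx.2⟩
  have : a ∈ hT.segment y a' ∩ S :=
    Finset.mem_inter.2 ⟨hjoin ▸ Finset.mem_union_left _ (right_mem_segment _ _), haS⟩
  rw [ha'] at this
  exact Finset.mem_singleton.1 this

lemma segment_nearest_inter (hS : S.Nonempty) :
    hT.segment y (hT.nearest S y) ∩ S = {hT.nearest S y} := by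
  have h : ∃ a, hT.segment y a ∩ S = {a} :=
    let ⟨_, hx⟩ := hS
    let ⟨a, _, ha⟩ := exists_segment_inter_eq (hT := hT) (y := y) hx
    ⟨a, ha⟩
  rw [nearest, dif_pos h]
  exact h.choose_spec

lemma nearest_mem (hS : S.Nonempty) : hT.nearest S y ∈ S :=
  (Finset.mem_inter.1 (segment_nearest_inter hS ▸ Finset.mem_singleton_self _)).2

lemma nearest_eq (hS : hT.IsSubtree S) (ha : hT.segment y a ∩ S = {a}) : hT.nearest S y = a :=
  eq_of_segment_inter_eq hS (segment_nearest_inter ⟨a, (Finset.mem_inter.1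
    (ha ▸ Finset.mem_singleton_self a)).2⟩) ha

lemma nearest_mem_segment (hS : hT.IsSubtree S) (hx : x ∈ hT.segment y z) (hxS : x ∈ S) :
    hT.nearest S y ∈ hT.segment y z := by
  obtain ⟨a, ha, haS⟩ := exists_segment_inter_eq (hT := hT) (y := y) hxS
  rw [nearest_eq hS haS]
  exact segment_subset_left hx ha

lemma mem_component : z ∈ hT.component A S y ↔ z ∈ A ∧ Disjoint (hT.segment y z) S :=
  Finset.mem_filter

lemma component_subset : hT.component A S y ⊆ A := Finset.filter_subset _ _

lemma notMem_of_mem_component (hz : z ∈ hT.component A S y) : z ∉ S :=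
  Finset.disjoint_left.1 (mem_component.1 hz).2 (right_mem_segment _ _)

lemma self_mem_component (hy : y ∈ A) (hyS : y ∉ S) : y ∈ hT.component A S y := by
  simp [mem_component, hy, hyS]

lemma mem_component_singleton {c : ι} (hz : z ∈ A) :
    z ∈ hT.component A {c} y ↔ c ∉ hT.segment y z := by
  simp [mem_component, hz]

lemma component_eq_of_mem (hz : z ∈ hT.component A S y) :
    hT.component A S z = hT.component A S y := by
  have hyz := (mem_component.1 hz).2
  ext x
  simp only [mem_component, and_congr_right_iff]
  refine fun _ => ⟨fun h => ?_, fun h => ?_⟩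
  · exact (Finset.disjoint_union_left.2 ⟨hyz, h⟩).mono_left (segment_subset_union y z x)
  · exact (Finset.disjoint_union_left.2 ⟨segment_comm y z ▸ hyz, h⟩).mono_left
      (segment_subset_union z y x)

lemma disjoint_component_of_notMem (hz : z ∈ A) (h : z ∉ hT.component A S y) :
    Disjoint (hT.component A S y) (hT.component A S z) := by
  refine Finset.disjoint_left.2 fun x hxy hxz => h (mem_component.2 ⟨hz, ?_⟩)
  have h₁ := (mem_component.1 hxy).2
  have h₂ := (mem_component.1 hxz).2
  rw [segment_comm] at h₂
  exact (Finset.disjoint_union_left.2 ⟨h₁, h₂⟩).mono_left (segment_subset_union y x z)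

lemma component_anti (h : S ⊆ S') : hT.component A S' y ⊆ hT.component A S y := fun _ hz =>
  mem_component.2 ⟨component_subset hz, (mem_component.1 hz).2.mono_right h⟩

lemma component_subset_component (hS : S ⊆ S') (hQ : Q ⊆ S') :
    hT.component A S' y ⊆ hT.component (hT.component A S y) Q y := fun _ hz =>
  mem_component.2 ⟨component_anti hS hz, (mem_component.1 hz).2.mono_right hQ⟩

lemma isSubtree_component (hA : hT.IsSubtree A) : hT.IsSubtree (hT.component A S y) := by
  intro a ha b hb x hx
  obtain ⟨haA, hya⟩ := mem_component.1 ha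
  obtain ⟨hbA, hyb⟩ := mem_component.1 hb
  refine mem_component.2 ⟨hA haA hbA x hx, ?_⟩
  have hab : Disjoint (hT.segment a b) S := by
    rw [segment_comm] at hya
    exact (Finset.disjoint_union_left.2 ⟨hya, hyb⟩).mono_left (segment_subset_union a y b)
  exact (Finset.disjoint_union_left.2 ⟨hya, hab.mono_left (segment_subset_left hx)⟩).mono_left
    (segment_subset_union y a x)

lemma nearest_mem_segment_of_notMem_component (hS : hT.IsSubtree S) (hz : z ∈ A)
    (h : z ∉ hT.component A S y) : hT.nearest S y ∈ hT.segment y z := by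
  obtain ⟨x, hx, hxS⟩ := Finset.not_disjoint_iff.1 fun hd => h (mem_component.2 ⟨hz, hd⟩)
  exact nearest_mem_segment hS hx hxS

lemma nearest_eq_of_mem_component (hS : hT.IsSubtree S) (hne : S.Nonempty)
    (hz : z ∈ hT.component A S y) : hT.nearest S z = hT.nearest S y := by
  have hyz := (mem_component.1 hz).2
  have ha := segment_nearest_inter (hT := hT) (y := y) hne
  refine nearest_eq hS (Finset.eq_singleton_iff_unique_mem.2 ⟨Finset.mem_inter.2
    ⟨right_mem_segment _ _, nearest_mem hne⟩, fun x hx => ?_⟩)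
  rw [Finset.mem_inter] at hx
  rcases Finset.mem_union.1 (segment_subset_union z y _ hx.1) with h | h
  · rw [segment_comm] at h
    exact absurd hx.2 (Finset.disjoint_left.1 hyz h)
  · exact Finset.mem_singleton.1 (ha ▸ Finset.mem_inter.2 ⟨h, hx.2⟩)

end Component

/-! ### A path leaving light components -/

def IsLightCut (w : ι → ℕ) (W : ℕ) (B P : Finset ι) : Prop :=
  ∀ y ∈ B, y ∉ P → 3 * ∑ i ∈ hT.component B P y, w i ≤ W

def IsArm (w : ι → ℕ) (W : ℕ) (A D : Finset ι) (c z : ι) : Prop :=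
  hT.segment c z ⊆ insert c D ∧
    ∀ y ∈ D, y ∉ hT.segment c z → 3 * ∑ i ∈ hT.component A (hT.segment c z) y, w i ≤ W

section LightCut

variable {hT} {A B D₁ D₂ P P' : Finset ι} {c c₁ y z z₁ z₂ : ι} {w : ι → ℕ} {W : ℕ}

lemma sum_component_le_of_subset (h : P ⊆ P') :
    ∑ i ∈ hT.component A P' y, w i ≤ ∑ i ∈ hT.component A P y, w i :=
  Finset.sum_le_sum_of_subset (component_anti h)

lemma length_path_of_mem_segment (h : T.Adj c c₁) (hz : c₁ ∈ hT.segment c z) :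
    (hT.path c z).length = (hT.path c₁ z).length + 1 := by
  rw [← length_path_add_of_mem hz, path_cons h (by simpa using h.ne), path_self]
  simp [add_comm]

lemma length_path_of_notMem_segment (h : T.Adj c c₁) (hz : c₁ ∉ hT.segment c z) :
    (hT.path c₁ z).length = (hT.path c z).length + 1 := by
  rw [path_cons h.symm hz, Walk.length_cons]

/-- Moving from `c` to a neighbour `c₁` changes the potential `∑ w z * d(c, z)` by the weight of
the nodes not behind `c₁` minus the weight of those behind it. -/
lemma two_mul_sum_behind_le (h : T.Adj c c₁) (hmin : ∑ z ∈ A, w z * (hT.path c z).length ≤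
    ∑ z ∈ A, w z * (hT.path c₁ z).length) :
    2 * ∑ z ∈ A with c₁ ∈ hT.segment c z, w z ≤ ∑ z ∈ A, w z := by
  have key : ∑ z ∈ A, w z * (hT.path c₁ z).length + 2 * ∑ z ∈ A with c₁ ∈ hT.segment c z, w z =
      ∑ z ∈ A, w z * (hT.path c z).length + ∑ z ∈ A, w z := by
    rw [Finset.sum_filter, Finset.mul_sum, ← Finset.sum_add_distrib, ← Finset.sum_add_distrib]
    refine Finset.sum_congr rfl fun z _ => ?_
    by_cases hz : c₁ ∈ hT.segment c z
    · rw [if_pos hz, length_path_of_mem_segment h hz]; ring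
    · rw [if_neg hz, length_path_of_notMem_segment h hz]; ring
  omega

lemma exists_centroid (hA : hT.IsSubtree A) (hne : A.Nonempty) (w : ι → ℕ) :
    ∃ c ∈ A, ∀ y ∈ A, y ≠ c → 2 * ∑ i ∈ hT.component A {c} y, w i ≤ ∑ i ∈ A, w i := by
  obtain ⟨c, hcA, hmin⟩ :=
    Finset.exists_min_image A (fun c => ∑ z ∈ A, w z * (hT.path c z).length) hne
  refine ⟨c, hcA, fun y hy hyc => ?_⟩
  obtain ⟨c₁, h, hc, hseg⟩ := exists_adj_segment_cons (hT := hT) hyc.symm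
  have hc₁A : c₁ ∈ A := hA hcA hy c₁ (hseg ▸ Finset.mem_insert_of_mem (left_mem_segment _ _))
  have hc₁ : c₁ ∈ hT.component A {c} y := by
    rwa [mem_component_singleton hc₁A, segment_comm]
  have hbehind : hT.component A {c} y ⊆ A.filter (c₁ ∈ hT.segment c ·) := by
    intro z hz
    have hzA := component_subset hz
    have hzc : c ≠ z := fun hcz => notMem_of_mem_component hz (by simp [hcz])
    obtain ⟨c₂, h₂, hc₂, hseg₂⟩ := exists_adj_segment_cons (hT := hT) hzc
    have hc₂ : c₂ ∈ hT.component A {c} y := by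
      rw [← component_eq_of_mem hz, mem_component_singleton
        (hA hcA hzA c₂ (hseg₂ ▸ Finset.mem_insert_of_mem (left_mem_segment _ _))), segment_comm]
      exact hc₂
    -- two different neighbours of `c` in one component would put `c` into it
    obtain rfl : c₂ = c₁ := by
      by_contra hne
      have hc₁₂ : c₁ ∉ hT.segment c c₂ := by simp [segment_of_adj h₂, h.ne', Ne.symm hne]
      have := isSubtree_component hA hc₁ hc₂ c (segment_cons h.symm hc₁₂ ▸
        Finset.mem_insert_of_mem (left_mem_segment _ _))
      exact notMem_of_mem_component this (Finset.mem_singleton_self c)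
    exact Finset.mem_filter.2 ⟨hzA, hseg₂ ▸ Finset.mem_insert_of_mem (left_mem_segment _ _)⟩
  calc 2 * ∑ i ∈ hT.component A {c} y, w i ≤ 2 * ∑ z ∈ A with c₁ ∈ hT.segment c z, w z := by
        gcongr
    _ ≤ ∑ z ∈ A, w z := two_mul_sum_behind_le h (hmin c₁ hc₁A)

lemma exists_isArm (hB : hT.IsSubtree B) (hc : c ∈ B) (hy : y ∈ B) (hyc : y ≠ c)
    (hD : ∀ x ∈ hT.component B {c} y, ∃ z, hT.segment x z ⊆ hT.component B {c} y ∧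
      hT.IsLightCut w W (hT.component B {c} y) (hT.segment x z)) :
    ∃ z, hT.IsArm w W B (hT.component B {c} y) c z := by
  set D := hT.component B {c} y
  obtain ⟨x, h, hcx, hseg⟩ := exists_adj_segment_cons (hT := hT) hyc.symm
  have hx : x ∈ D := by
    rwa [mem_component_singleton (hB hc hy x (hseg ▸ Finset.mem_insert_of_mem
      (left_mem_segment _ _))), segment_comm]
  obtain ⟨z, hxz, hlight⟩ := hD x hx
  have hcz : c ∉ hT.segment x z := fun hc' =>
    notMem_of_mem_component (hxz hc') (Finset.mem_singleton_self c)
  have hseg' := segment_cons h hcz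
  refine ⟨z, hseg' ▸ Finset.insert_subset_insert c hxz, fun y' hy' hy'z => ?_⟩
  have hsub : hT.component B (hT.segment c z) y' ⊆ hT.component D (hT.segment x z) y' := by
    have hD' : hT.component B {c} y' = D := component_eq_of_mem hy'
    rw [← hD']
    exact component_subset_component (by simp [hseg']) (hseg' ▸ Finset.subset_insert c _)
  exact (Nat.mul_le_mul_left 3 (Finset.sum_le_sum_of_subset hsub)).trans
    (hlight y' hy' fun h' => hy'z (hseg' ▸ Finset.mem_insert_of_mem h'))

/-- Walk from `x` into a heavy component as long as there is one: since `B` weighs at most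
`2W/3`, the components left behind then weigh less than `W/3`. -/
lemma exists_isLightCut_segment (hB : hT.IsSubtree B) (hw : 3 * ∑ i ∈ B, w i ≤ 2 * W) :
    ∀ x ∈ B, ∃ z, hT.segment x z ⊆ B ∧ hT.IsLightCut w W B (hT.segment x z) := by
  induction B using Finset.strongInduction with
  | H B ih =>
  intro x hx
  by_cases hheavy : ∃ y ∈ B, y ≠ x ∧ W < 3 * ∑ i ∈ hT.component B {x} y, w i
  swap
  · push Not at hheavy
    refine ⟨x, by simpa using hx, fun y hy hyx => ?_⟩
    rw [segment_self] at hyx ⊢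
    exact hheavy y hy (by simpa using hyx)
  obtain ⟨y, hy, hyx, hW⟩ := hheavy
  set D := hT.component B {x} y
  have hxD : x ∉ D := fun h => notMem_of_mem_component h (Finset.mem_singleton_self x)
  have hDB : D ⊂ B := Finset.ssubset_iff_subset_ne.2 ⟨component_subset, fun h => hxD (h ▸ hx)⟩
  have hwD : ∑ i ∈ D, w i ≤ ∑ i ∈ B, w i := Finset.sum_le_sum_of_subset component_subset
  obtain ⟨z, hsub, hlight⟩ :=
    exists_isArm hB hx hy hyx (ih D hDB (isSubtree_component hB) (by omega))
  refine ⟨z, hsub.trans (Finset.insert_subset hx component_subset), fun y' hy' hy'z => ?_⟩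
  by_cases hy'D : y' ∈ D
  · exact hlight y' hy'D hy'z
  have hsum : ∑ i ∈ D, w i + ∑ i ∈ hT.component B {x} y', w i ≤ ∑ i ∈ B, w i := by
    rw [← Finset.sum_union (disjoint_component_of_notMem hy' hy'D)]
    exact Finset.sum_le_sum_of_subset (Finset.union_subset component_subset component_subset)
  have := sum_component_le_of_subset (hT := hT) (A := B) (y := y') (w := w)
    (show {x} ⊆ hT.segment x z by simp)
  omega

/-- At a centroid at most two components are heavy, and an arm into each of them leaves
everything else light. -/
lemma exists_isArm_pair (hA : hT.IsSubtree A) (hcA : c ∈ A)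
    (hcent : ∀ y ∈ A, y ≠ c → 2 * ∑ i ∈ hT.component A {c} y, w i ≤ ∑ i ∈ A, w i) :
    ∃ z₁ z₂ D₁ D₂, D₁ ⊆ A ∧ D₂ ⊆ A ∧ Disjoint D₁ D₂ ∧
      hT.IsArm w (∑ i ∈ A, w i) A D₁ c z₁ ∧ hT.IsArm w (∑ i ∈ A, w i) A D₂ c z₂ ∧
      ∀ y ∈ A, y ≠ c → y ∉ D₁ → y ∉ D₂ →
        3 * ∑ i ∈ hT.component A {c} y, w i ≤ ∑ i ∈ A, w i := by
  set W := ∑ i ∈ A, w i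
  have arm : ∀ y ∈ A, y ≠ c → ∃ z, hT.IsArm w W A (hT.component A {c} y) c z :=
    fun y hy hyc => exists_isArm hA hcA hy hyc fun x hx => exists_isLightCut_segment
      (isSubtree_component hA) (by have := hcent y hy hyc; omega) x hx
  have hself : hT.IsArm w W A ∅ c c := ⟨by simp, by simp⟩
  by_cases h₁ : ∃ y₁ ∈ A, y₁ ≠ c ∧ W < 3 * ∑ i ∈ hT.component A {c} y₁, w i
  swap
  · push Not at h₁
    exact ⟨c, c, ∅, ∅, by simp, by simp, by simp, hself, hself, fun y hy hyc _ _ => h₁ y hy hyc⟩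
  obtain ⟨y₁, hy₁, hy₁c, hW₁⟩ := h₁
  obtain ⟨z₁, harm₁⟩ := arm y₁ hy₁ hy₁c
  by_cases h₂ : ∃ y₂ ∈ A, y₂ ≠ c ∧ y₂ ∉ hT.component A {c} y₁ ∧
    W < 3 * ∑ i ∈ hT.component A {c} y₂, w i
  swap
  · push Not at h₂
    exact ⟨z₁, c, _, ∅, component_subset, by simp, by simp, harm₁, hself,
      fun y hy hyc hy₁ _ => h₂ y hy hyc hy₁⟩
  obtain ⟨y₂, hy₂, hy₂c, hy₂C₁, hW₂⟩ := h₂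
  obtain ⟨z₂, harm₂⟩ := arm y₂ hy₂ hy₂c
  have hdisj := disjoint_component_of_notMem hy₂ hy₂C₁
  refine ⟨z₁, z₂, _, _, component_subset, component_subset, hdisj, harm₁, harm₂,
    fun y hy _ hy₁ hy₂' => ?_⟩
  have hsum : ∑ i ∈ hT.component A {c} y₁, w i + ∑ i ∈ hT.component A {c} y₂, w i +
      ∑ i ∈ hT.component A {c} y, w i ≤ W := by
    rw [← Finset.sum_union hdisj, ← Finset.sum_union (Finset.disjoint_union_left.2
      ⟨disjoint_component_of_notMem hy hy₁, disjoint_component_of_notMem hy hy₂'⟩)]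
    exact Finset.sum_le_sum_of_subset (Finset.union_subset
      (Finset.union_subset component_subset component_subset) component_subset)
  omega

lemma isLightCut_of_isArm (hcA : c ∈ A) (hD₁ : D₁ ⊆ A) (hD₂ : D₂ ⊆ A) (hdisj : Disjoint D₁ D₂)
    (h₁ : hT.IsArm w W A D₁ c z₁) (h₂ : hT.IsArm w W A D₂ c z₂)
    (hlight : ∀ y ∈ A, y ≠ c → y ∉ D₁ → y ∉ D₂ → 3 * ∑ i ∈ hT.component A {c} y, w i ≤ W) :
    hT.segment z₁ z₂ ⊆ A ∧ hT.IsLightCut w W A (hT.segment z₁ z₂) := by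
  have hP : hT.segment z₁ z₂ = hT.segment z₁ c ∪ hT.segment c z₂ := by
    refine segment_eq_union_of_inter_subset fun x hx => ?_
    rw [Finset.mem_inter, segment_comm] at hx
    rcases Finset.mem_insert.1 (h₁.1 hx.1) with rfl | hx₁
    · exact Finset.mem_singleton_self _
    rcases Finset.mem_insert.1 (h₂.1 hx.2) with rfl | hx₂
    · exact Finset.mem_singleton_self _
    exact absurd hx₂ (Finset.disjoint_left.1 hdisj hx₁)
  have hc₁P : hT.segment c z₁ ⊆ hT.segment z₁ z₂ := by
    rw [hP, segment_comm z₁ c]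
    exact Finset.subset_union_left
  have hc₂P : hT.segment c z₂ ⊆ hT.segment z₁ z₂ := hP ▸ Finset.subset_union_right
  have mono : ∀ {P y}, P ⊆ hT.segment z₁ z₂ → 3 * ∑ i ∈ hT.component A P y, w i ≤ W →
      3 * ∑ i ∈ hT.component A (hT.segment z₁ z₂) y, w i ≤ W :=
    fun h hy => (Nat.mul_le_mul_left 3 (sum_component_le_of_subset h)).trans hy
  refine ⟨?_, fun y hy hyP => ?_⟩
  · rw [hP, segment_comm]
    exact Finset.union_subset (h₁.1.trans (Finset.insert_subset hcA hD₁))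
      (h₂.1.trans (Finset.insert_subset hcA hD₂))
  by_cases hy₁ : y ∈ D₁
  · exact mono hc₁P (h₁.2 y hy₁ fun h => hyP (hc₁P h))
  by_cases hy₂ : y ∈ D₂
  · exact mono hc₂P (h₂.2 y hy₂ fun h => hyP (hc₂P h))
  have hcP : c ∈ hT.segment z₁ z₂ := hc₁P (left_mem_segment c z₁)
  exact mono (by simpa using hcP) (hlight y hy (fun h => hyP (h ▸ hcP)) hy₁ hy₂)

theorem exists_isLightCut (hA : hT.IsSubtree A) (hne : A.Nonempty) (w : ι → ℕ) :
    ∃ p q, hT.segment p q ⊆ A ∧ hT.IsLightCut w (∑ i ∈ A, w i) A (hT.segment p q) := by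
  obtain ⟨c, hcA, hcent⟩ := exists_centroid hA hne w
  obtain ⟨z₁, z₂, D₁, D₂, hD₁, hD₂, hdisj, h₁, h₂, hlight⟩ := exists_isArm_pair hA hcA hcent
  exact ⟨z₁, z₂, isLightCut_of_isArm hcA hD₁ hD₂ hdisj h₁ h₂ hlight⟩

end LightCut

/-! ### Assembling the path-decomposition along the spine -/

noncomputable def componentsAt (A S : Finset ι) (j : ι) : Finset (Finset ι) :=
  ((A \ S).filter (hT.nearest S · = j)).image (hT.component A S)

noncomputable def spineBlock (X : ι → Finset V) (L : ι → Finset ι → List (Finset V))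
    (A S : Finset ι) (j : ι) : List (Finset V) :=
  ((hT.componentsAt A S j).toList.map fun C => (L j C).map (· ∪ X j)).flatten ++ [X j]

noncomputable def spineDecomp (X : ι → Finset V) (L : ι → Finset ι → List (Finset V))
    (A : Finset ι) (p q : ι) : List (Finset V) :=
  ((hT.path p q).support.map (hT.spineBlock X L A (hT.segment p q))).flatten

section Spine

variable {hT} {X : ι → Finset V} {L : ι → Finset ι → List (Finset V)} {A S C C' : Finset ι}
  {R s : Finset V} {i j j' y y' : ι} {v : V} {k t : ℕ}

lemma mem_componentsAt :
    C ∈ hT.componentsAt A S j ↔ ∃ y ∈ A, y ∉ S ∧ hT.nearest S y = j ∧ hT.component A S y = C := by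
  simp [componentsAt, and_assoc]

lemma subset_of_mem_componentsAt (hC : C ∈ hT.componentsAt A S j) : C ⊆ A := by
  obtain ⟨y, -, -, -, rfl⟩ := mem_componentsAt.1 hC
  exact component_subset

lemma disjoint_of_mem_componentsAt (hC : C ∈ hT.componentsAt A S j) : Disjoint C S := by
  obtain ⟨y, -, -, -, rfl⟩ := mem_componentsAt.1 hC
  exact Finset.disjoint_left.2 fun _ => notMem_of_mem_component

lemma mem_spineBlock : s ∈ hT.spineBlock X L A S j ↔
    s = X j ∨ ∃ C ∈ hT.componentsAt A S j, ∃ s' ∈ L j C, s' ∪ X j = s := by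
  simp [spineBlock, or_comm]

lemma mem_spineDecomp {p q : ι} : s ∈ hT.spineDecomp X L A p q ↔
    ∃ j ∈ hT.segment p q, s ∈ hT.spineBlock X L A (hT.segment p q) j := by
  simp [spineDecomp, mem_segment]

lemma mem_of_mem_spineBlock_of_mem (hv : v ∈ X j) (hs : s ∈ hT.spineBlock X L A S j) : v ∈ s := by
  rcases mem_spineBlock.1 hs with rfl | ⟨C, hC, s', hs', rfl⟩
  exacts [hv, Finset.mem_union_right _ hv]

section Separation

variable (hS : hT.IsSubtree S) (hne : S.Nonempty)
include hS hne

lemma component_eq_and_nearest_eq (hC : C ∈ hT.componentsAt A S j) (hy : y ∈ C) :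
    hT.component A S y = C ∧ hT.nearest S y = j := by
  obtain ⟨y₀, -, -, rfl, rfl⟩ := mem_componentsAt.1 hC
  exact ⟨component_eq_of_mem hy, nearest_eq_of_mem_component hS hne hy⟩

variable (hX : ∀ v, hT.IsSubtree {i | v ∈ X i})
include hX

lemma mem_of_mem_componentsAt (hC : C ∈ hT.componentsAt A S j) (hy : y ∈ C) (hvy : v ∈ X y)
    (hy' : y' ∈ A) (hy'C : y' ∉ C) (hvy' : v ∈ X y') : v ∈ X j := by
  obtain ⟨hCy, rfl⟩ := component_eq_and_nearest_eq hS hne hC hy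
  exact hX v hvy hvy' _ (nearest_mem_segment_of_notMem_component hS hy' (hCy ▸ hy'C))

lemma eq_of_mem_componentsAt (hC : C ∈ hT.componentsAt A S j)
    (hC' : C' ∈ hT.componentsAt A S j') (hy : y ∈ C) (hy' : y' ∈ C') (hvy : v ∈ X y)
    (hvy' : v ∈ X y') (hvj : v ∉ X j) : C = C' ∧ j = j' := by
  by_cases hy'C : y' ∈ C
  · obtain ⟨h₁, h₂⟩ := component_eq_and_nearest_eq hS hne hC hy'C
    obtain ⟨h₁', h₂'⟩ := component_eq_and_nearest_eq hS hne hC' hy'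
    exact ⟨h₁.symm.trans h₁', h₂.symm.trans h₂'⟩
  · exact absurd (mem_of_mem_componentsAt hS hne hX hC hy hvy
      (subset_of_mem_componentsAt hC' hy') hy'C hvy') hvj

lemma biUnion_sdiff_subset_of_mem_componentsAt (hC : C ∈ hT.componentsAt A S j) :
    C.biUnion X \ (R ∪ X j) ⊆ (A.biUnion X \ R).filter fun v => ∀ i ∈ A \ C, v ∉ X i := by
  intro v hv
  simp only [Finset.mem_sdiff, Finset.mem_union, not_or, Finset.mem_biUnion] at hv
  obtain ⟨⟨y, hy, hvy⟩, hvR, hvj⟩ := hv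
  refine Finset.mem_filter.2 ⟨Finset.mem_sdiff.2 ⟨Finset.mem_biUnion.2
    ⟨y, subset_of_mem_componentsAt hC hy, hvy⟩, hvR⟩, fun i hi hvi => hvj ?_⟩
  rw [Finset.mem_sdiff] at hi
  exact mem_of_mem_componentsAt hS hne hX hC hy hvy hi.1 hi.2 hvi

end Separation

section Block

variable (hL : ∀ C ∈ hT.componentsAt A S j, IsPathDecompOn X C (R ∪ X j) k (L j C))
include hL

lemma subset_biUnion_of_mem_spineBlock (hjA : j ∈ A) (hs : s ∈ hT.spineBlock X L A S j) :
    s ⊆ A.biUnion X := by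
  rcases mem_spineBlock.1 hs with rfl | ⟨C, hC, s', hs', rfl⟩
  · exact Finset.subset_biUnion_of_mem X hjA
  · exact Finset.union_subset (((hL C hC).subset_biUnion s' hs').trans
      (Finset.biUnion_subset_biUnion_of_subset_left X (subset_of_mem_componentsAt hC)))
      (Finset.subset_biUnion_of_mem X hjA)

lemma card_sdiff_le_of_mem_spineBlock (hsize : (X j).card ≤ t + 1)
    (hs : s ∈ hT.spineBlock X L A S j) : (s \ R).card ≤ k + (t + 1) := by
  rcases mem_spineBlock.1 hs with rfl | ⟨C, hC, s', hs', rfl⟩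
  · exact (Finset.card_le_card Finset.sdiff_subset).trans (hsize.trans (Nat.le_add_left _ _))
  calc ((s' ∪ X j) \ R).card ≤ (s' \ (R ∪ X j) ∪ X j).card := by
        refine Finset.card_le_card fun v hv => ?_
        simp only [Finset.mem_sdiff, Finset.mem_union] at hv ⊢
        tauto
    _ ≤ (s' \ (R ∪ X j)).card + (X j).card := Finset.card_union_le _ _
    _ ≤ k + (t + 1) := add_le_add ((hL C hC).card_sdiff_le s' hs') hsize

lemma exists_mem_of_mem_map_union (hC : C ∈ hT.componentsAt A S j)
    (hs : s ∈ (L j C).map (· ∪ X j)) (hv : v ∈ s) (hvj : v ∉ X j) : ∃ y ∈ C, v ∈ X y := by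
  obtain ⟨s', hs', rfl⟩ := List.mem_map.1 hs
  exact Finset.mem_biUnion.1 ((hL C hC).subset_biUnion s' hs'
    ((Finset.mem_union.1 hv).resolve_right hvj))

lemma mem_or_exists_of_mem_spineBlock (hs : s ∈ hT.spineBlock X L A S j) (hv : v ∈ s) :
    v ∈ X j ∨ ∃ C ∈ hT.componentsAt A S j, ∃ y ∈ C, v ∈ X y := by
  by_cases hvj : v ∈ X j
  · exact Or.inl hvj
  rcases mem_spineBlock.1 hs with rfl | ⟨C, hC, s', hs', rfl⟩
  · exact Or.inl hv
  exact Or.inr ⟨C, hC, exists_mem_of_mem_map_union hL hC (List.mem_map_of_mem hs') hv hvj⟩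

lemma contiguous_spineBlock (hS : hT.IsSubtree S) (hne : S.Nonempty)
    (hX : ∀ v, hT.IsSubtree {i | v ∈ X i}) (hvj : v ∉ X j) :
    (hT.spineBlock X L A S j).Contiguous (v ∈ ·) := by
  refine (List.contiguous_flatten_of_pairwise ?_ ?_).append_of_forall_not (by simpa using hvj)
  · simp only [List.mem_map, Finset.mem_toList]
    rintro _ ⟨C, hC, rfl⟩
    exact List.Contiguous.map (p := (v ∈ ·)) _
      (((hL C hC).contiguous v).congr fun s _ => by simp [hvj])
  · rw [List.pairwise_map]
    refine List.Pairwise.imp_of_mem (fun {C C'} hC hC' hCC' ⟨s, hs, hvs⟩ s' hs' hvs' => hCC' ?_)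
      (Finset.nodup_toList _)
    rw [Finset.mem_toList] at hC hC'
    obtain ⟨y, hy, hvy⟩ := exists_mem_of_mem_map_union hL hC hs hvs hvj
    obtain ⟨y', hy', hvy'⟩ := exists_mem_of_mem_map_union hL hC' hs' hvs' hvj
    exact (eq_of_mem_componentsAt hS hne hX hC hC' hy hy' hvy hvy' hvj).1

end Block

section Decomp

variable {p q : ι}
  (hL : ∀ j ∈ hT.segment p q, ∀ C ∈ hT.componentsAt A (hT.segment p q) j,
    IsPathDecompOn X C (R ∪ X j) k (L j C))
include hL

lemma exists_mem_spineDecomp_superset (hi : i ∈ A) :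
    ∃ s ∈ hT.spineDecomp X L A p q, X i ⊆ s := by
  set S := hT.segment p q
  by_cases hiS : i ∈ S
  · exact ⟨X i, mem_spineDecomp.2 ⟨i, hiS, mem_spineBlock.2 (Or.inl rfl)⟩, subset_rfl⟩
  set j := hT.nearest S i
  have hj : j ∈ S := nearest_mem ⟨p, left_mem_segment p q⟩
  have hC : hT.component A S i ∈ hT.componentsAt A S j :=
    mem_componentsAt.2 ⟨i, hi, hiS, rfl, rfl⟩
  obtain ⟨s, hs, hXs⟩ := (hL j hj _ hC).exists_superset i (self_mem_component hi hiS)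
  exact ⟨s ∪ X j, mem_spineDecomp.2 ⟨j, hj, mem_spineBlock.2 (Or.inr ⟨_, hC, s, hs, rfl⟩)⟩,
    hXs.trans Finset.subset_union_left⟩

/-- A vertex met by the spine occurs exactly in the blocks of the spine nodes whose bags contain
it, and these are consecutive; any other vertex occurs inside a single component. -/
lemma contiguous_spineDecomp (hX : ∀ v, hT.IsSubtree {i | v ∈ X i})
    (hpq : hT.segment p q ⊆ A) (v : V) : (hT.spineDecomp X L A p q).Contiguous (v ∈ ·) := by
  set S := hT.segment p q
  have hS : hT.IsSubtree S := isSubtree_segment p q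
  have hne : S.Nonempty := ⟨p, left_mem_segment p q⟩
  by_cases hv : ∃ j₀ ∈ S, v ∈ X j₀
  · obtain ⟨j₀, hj₀, hvj₀⟩ := hv
    have hocc : ∀ j ∈ S, (∃ s ∈ hT.spineBlock X L A S j, v ∈ s) ↔ v ∈ X j := by
      refine fun j hj => ⟨fun ⟨s, hs, hvs⟩ => ?_,
        fun hvj => ⟨X j, mem_spineBlock.2 (Or.inl rfl), hvj⟩⟩
      rcases mem_or_exists_of_mem_spineBlock (hL j hj) hs hvs with h | ⟨C, hC, y, hy, hvy⟩
      · exact h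
      exact mem_of_mem_componentsAt hS hne hX hC hy hvy (hpq hj₀)
        (Finset.disjoint_right.1 (disjoint_of_mem_componentsAt hC) hj₀) hvj₀
    refine List.Contiguous.flatten ?_ ?_
    · exact List.Contiguous.map _ (((hX v).contiguous_support (isPath_path p q)).congr
        fun j hj => (hocc j (mem_segment.2 hj)).symm)
    · simp only [List.mem_map]
      rintro _ ⟨j, hj, rfl⟩ hocc' s hs
      exact mem_of_mem_spineBlock_of_mem ((hocc j (mem_segment.2 hj)).1 hocc') hs
  push Not at hv
  refine List.contiguous_flatten_of_pairwise ?_ ?_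
  · simp only [List.mem_map]
    rintro _ ⟨j, hj, rfl⟩
    exact contiguous_spineBlock (hL j (mem_segment.2 hj)) hS hne hX (hv j (mem_segment.2 hj))
  · rw [List.pairwise_map]
    refine List.Pairwise.imp_of_mem (fun {j j'} hj hj' hjj' ⟨s, hs, hvs⟩ s' hs' hvs' => hjj' ?_)
      (isPath_path p q).support_nodup
    rw [← mem_segment] at hj hj'
    obtain ⟨C, hC, y, hy, hvy⟩ :=
      (mem_or_exists_of_mem_spineBlock (hL j hj) hs hvs).resolve_left (hv j hj)
    obtain ⟨C', hC', y', hy', hvy'⟩ :=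
      (mem_or_exists_of_mem_spineBlock (hL j' hj') hs' hvs').resolve_left (hv j' hj')
    exact (eq_of_mem_componentsAt hS hne hX hC hC' hy hy' hvy hvy' (hv j hj)).2

theorem isPathDecompOn_spineDecomp (hX : ∀ v, hT.IsSubtree {i | v ∈ X i})
    (hsize : ∀ i, (X i).card ≤ t + 1) (hpq : hT.segment p q ⊆ A) :
    IsPathDecompOn X A R (k + (t + 1)) (hT.spineDecomp X L A p q) where
  exists_superset _ hi := exists_mem_spineDecomp_superset hL hi
  subset_biUnion s hs := by
    obtain ⟨j, hj, hs⟩ := mem_spineDecomp.1 hs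
    exact subset_biUnion_of_mem_spineBlock (hL j hj) (hpq hj) hs
  card_sdiff_le s hs := by
    obtain ⟨j, hj, hs⟩ := mem_spineDecomp.1 hs
    exact card_sdiff_le_of_mem_spineBlock (hL j hj) (hsize j) hs
  contiguous := contiguous_spineDecomp hL hX hpq

end Decomp

theorem exists_isPathDecompOn (hX : ∀ v, hT.IsSubtree {i | v ∈ X i})
    (hsize : ∀ i, (X i).card ≤ t + 1) (d : ℕ) :
    ∀ {A : Finset ι} {R : Finset V}, hT.IsSubtree A → 2 * (A.biUnion X \ R).card + 1 ≤ 3 ^ d →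
      ∃ L, IsPathDecompOn X A R ((t + 1) * d) L := by
  induction d with
  | zero =>
    intro A R _ hw
    rw [pow_zero] at hw
    exact ⟨_, isPathDecompOn_singleton (Finset.sdiff_eq_empty_iff_subset.1
      (Finset.card_eq_zero.1 (by omega)))⟩
  | succ d ih =>
    intro A R hA hw
    rcases A.eq_empty_or_nonempty with rfl | hne
    · exact ⟨_, isPathDecompOn_singleton (by simp)⟩
    obtain ⟨w, hwA, hwC⟩ :=
      exists_weight_sum_eq_card (Finset.sdiff_subset (s := A.biUnion X) (t := R))
    obtain ⟨p, q, hpq, hlight⟩ := exists_isLightCut hA hne w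
    set S := hT.segment p q
    have hcomp : ∀ j C, ∃ L', j ∈ S → C ∈ hT.componentsAt A S j →
        IsPathDecompOn X C (R ∪ X j) ((t + 1) * d) L' := by
      intro j C
      by_cases hC : C ∈ hT.componentsAt A S j
      swap
      · exact ⟨[], fun _ h => absurd h hC⟩
      obtain ⟨y, hy, hyS, -, rfl⟩ := mem_componentsAt.1 hC
      have h₁ := Finset.card_le_card (biUnion_sdiff_subset_of_mem_componentsAt (R := R)
        (isSubtree_segment p q) ⟨p, left_mem_segment p q⟩ hX hC)
      have h₂ := hwC (hT.component A S y) component_subset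
      have h₃ := hlight y hy hyS
      have h₄ : 3 ^ (d + 1) = 3 * 3 ^ d := pow_succ' 3 d
      obtain ⟨L', hL'⟩ := ih (A := hT.component A S y) (R := R ∪ X j) (isSubtree_component hA)
        (by omega)
      exact ⟨L', fun _ _ => hL'⟩
    choose L hL using hcomp
    rw [Nat.mul_succ]
    exact ⟨_, isPathDecompOn_spineDecomp (fun j hj C hC => hL j C hj hC) hX hsize hpq⟩

end Spine

lemma exists_isSubtree_cover [Fintype V] (G : SimpleGraph V) (X : ι → Finset V)
    (hvert : ∀ v, ∃ i, v ∈ X i) (hedge : ∀ u v, G.Adj u v → ∃ i, u ∈ X i ∧ v ∈ X i) :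
    ∃ A : Finset ι, hT.IsSubtree A ∧ (∀ v, ∃ i ∈ A, v ∈ X i) ∧
      ∀ u v, G.Adj u v → ∃ i ∈ A, u ∈ X i ∧ v ∈ X i := by
  choose f hf using hvert
  have : ∀ u v, ∃ i, G.Adj u v → u ∈ X i ∧ v ∈ X i := fun u v => by
    by_cases h : G.Adj u v
    · exact (hedge u v h).imp fun _ hi _ => hi
    · exact ⟨f u, fun h' => absurd h' h⟩
  choose g hg using this
  obtain ⟨A, hFA, hA⟩ := hT.exists_isSubtree_superset
    (Finset.univ.image f ∪ Finset.univ.image fun e : V × V => g e.1 e.2)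
  exact ⟨A, hA, fun v => ⟨f v, hFA (by simp), hf v⟩, fun u v huv =>
    ⟨g u v, hFA (Finset.mem_union_right _ (Finset.mem_image.2 ⟨(u, v), Finset.mem_univ _, rfl⟩)),
      hg u v huv⟩⟩

end IsTree

end SimpleGraph

/-- Every `n`-vertex graph of treewidth at most `t` has pathwidth at most
`(t+1)⌊log₃(2n+1) + 1⌋ - 1`. -/
theorem stmt11 {V : Type} [Fintype V] (n t : ℕ) (hn : Fintype.card V = n)
    (G : SimpleGraph V) (h : HasTreeDecompWidth G t) :
    HasPathDecompWidth G ((t + 1) * (Nat.log 3 (2 * n + 1) + 1) - 1) := by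
  classical
  obtain ⟨ι, T, X, hc, ha, hedge, hvert, hsize⟩ := h
  have hT : T.IsTree := ⟨hc, ha⟩
  obtain ⟨A, hA, hvA, heA⟩ := hT.exists_isSubtree_cover G X
    (fun v => let ⟨⟨i, hi⟩⟩ := (hvert v).nonempty; ⟨i, hi⟩) hedge
  obtain ⟨L, hL⟩ := SimpleGraph.IsTree.exists_isPathDecompOn
    (fun v => hT.isSubtree_of_preconnected_induce (hvert v).preconnected) hsize
    (Nat.log 3 (2 * n + 1) + 1) hA (R := ∅) (by
      have h₁ := Finset.card_le_univ (A.biUnion X \ ∅)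
      have h₂ := Nat.lt_pow_succ_log_self (by norm_num : 1 < 3) (2 * n + 1)
      omega)
  refine hasPathDecompWidth_of_list L (fun u v huv => ?_) (fun v => ?_) hL.contiguous
    fun s hs => ?_
  · obtain ⟨i, hi, hui, hvi⟩ := heA u v huv
    obtain ⟨s, hs, hXs⟩ := hL.exists_superset i hi
    exact ⟨s, hs, hXs hui, hXs hvi⟩
  · obtain ⟨i, hi, hvi⟩ := hvA v
    obtain ⟨s, hs, hXs⟩ := hL.exists_superset i hi
    exact ⟨s, hs, hXs hvi⟩
  · rw [Nat.sub_add_cancel (Nat.mul_pos (Nat.succ_pos t) (Nat.succ_pos _))]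
    simpa using hL.card_sdiff_le s hs
end

section
/- Let $G$ be a $d$-regular graph on $N$ vertices whose second-largest eigenvalue in absolute value is at most $\lambda$, partition $V(G)$ into sets $U_1, \ldots, U_{N/k}$ each of size $k$, and let $H$ be the bipartite graph with parts $V(G)$ and $U = \{u_1, \ldots, u_{N/k}\}$ where $v$ is adjacent to $u_i$ iff $v$ has a $G$-neighbour in $U_i$. Assume $\frac{2\lambda k}{d} \le \min(\epsilon, \tfrac12)$ and $N \ge (1+\epsilon)kn$. Then every subset $X \subseteq V(G)$ with $|X| \le n$ satisfies $|N_H(X)| \ge |X|$. -/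
/-!
Let `A` be the adjacency matrix of `G` and `f` the indicator vector of `X`. Since `G` is
`d`-regular, `∑ (A f) = d |X|`, and `A f` is supported on `N_G(X)`, so Cauchy–Schwarz gives
`(d |X|)² ≤ |N_G(X)| ‖A f‖²`. The all-ones vector is a `d`-eigenvector and all other
eigenvalues are at most `λ < d` in absolute value, so in an orthonormal eigenbasis it is a
multiple of the basis vector for `d`; expanding `f` in that basis gives
`‖A f‖² ≤ d² |X|² / N + λ² |X|`. Hence `|N_G(X)| ≥ d² |X| N / (d² |X| + λ² N)`, which is at
least `k |X|` when `2λk/d ≤ min(ε, 1/2)` and `N ≥ (1 + ε) k |X|`. Each group `U_i` contains at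
most `k` vertices of `N_G(X)`, so `N_G(X)` meets at least `|X|` groups, and the groups it meets
are exactly `N_H(X)`.
-/

open Matrix Finset WithLp
open scoped RealInnerProductSpace

namespace Matrix.IsHermitian

variable {n : Type*} [Fintype n] [DecidableEq n] {A : Matrix n n ℝ} (hA : A.IsHermitian)

lemma inner_eigenvectorBasis_mulVec (f : n → ℝ) (i : n) :
    ⟪hA.eigenvectorBasis i, toLp 2 (A *ᵥ f)⟫ =
      hA.eigenvalues i * ⟪hA.eigenvectorBasis i, toLp 2 f⟫ := by
  have hT := (isSymmetric_toEuclideanLin_iff.mpr hA) (hA.eigenvectorBasis i) (toLp 2 f)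
  simp only [toLpLin_apply, mulVec_eigenvectorBasis, toLp_smul, toLp_ofLp] at hT
  rw [← hT, real_inner_smul_left]

lemma inner_eigenvectorBasis_eq_zero_of_mulVec_eq_smul {d : ℝ} {g : n → ℝ}
    (hg : A *ᵥ g = d • g) {i : n} (hi : hA.eigenvalues i ≠ d) :
    ⟪hA.eigenvectorBasis i, toLp 2 g⟫ = 0 := by
  have h := hA.inner_eigenvectorBasis_mulVec g i
  rw [hg, toLp_smul, real_inner_smul_right] at h
  exact (mul_eq_mul_right_iff.mp h).resolve_left (Ne.symm hi)

lemma dotProduct_eq_sum_inner_eigenvectorBasis (f g : n → ℝ) :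
    g ⬝ᵥ f =
      ∑ i, ⟪hA.eigenvectorBasis i, toLp 2 g⟫ * ⟪hA.eigenvectorBasis i, toLp 2 f⟫ := by
  have h := hA.eigenvectorBasis.sum_inner_mul_inner (toLp 2 g) (toLp 2 f)
  rw [EuclideanSpace.inner_toLp_toLp, star_trivial] at h
  simpa [real_inner_comm, dotProduct_comm] using h.symm

lemma dotProduct_self_eq_sum_sq_inner_eigenvectorBasis (f : n → ℝ) :
    f ⬝ᵥ f = ∑ i, ⟪hA.eigenvectorBasis i, toLp 2 f⟫ ^ 2 := by
  simpa only [sq] using hA.dotProduct_eq_sum_inner_eigenvectorBasis f f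

lemma mulVec_dotProduct_mulVec_le {i₀ : n} {lam : ℝ}
    (hlam : ∀ i, i ≠ i₀ → |hA.eigenvalues i| ≤ lam) (f : n → ℝ) :
    (A *ᵥ f) ⬝ᵥ (A *ᵥ f) ≤
      hA.eigenvalues i₀ ^ 2 * ⟪hA.eigenvectorBasis i₀, toLp 2 f⟫ ^ 2 +
        lam ^ 2 * (f ⬝ᵥ f) := by
  set c := fun i ↦ ⟪hA.eigenvectorBasis i, toLp 2 f⟫
  have hrest :
      ∑ i ∈ univ.erase i₀, (hA.eigenvalues i * c i) ^ 2 ≤ lam ^ 2 * ∑ i, c i ^ 2 := by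
    rw [mul_sum]
    refine (sum_le_sum fun i hi ↦ ?_).trans
      (sum_le_sum_of_subset_of_nonneg (erase_subset i₀ univ) fun i _ _ ↦ by positivity)
    obtain ⟨hlo, hhi⟩ := abs_le.mp (hlam i (ne_of_mem_erase hi))
    rw [mul_pow]
    exact mul_le_mul_of_nonneg_right (sq_le_sq' hlo hhi) (sq_nonneg _)
  simp_rw [hA.dotProduct_self_eq_sum_sq_inner_eigenvectorBasis, hA.inner_eigenvectorBasis_mulVec]
  rw [← add_sum_erase univ _ (mem_univ i₀), mul_pow]
  exact add_le_add_right hrest _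

lemma sq_dotProduct_eq_of_inner_eigenvectorBasis_eq_zero {i₀ : n} {g : n → ℝ}
    (hg : ∀ i, i ≠ i₀ → ⟪hA.eigenvectorBasis i, toLp 2 g⟫ = 0) (f : n → ℝ) :
    (g ⬝ᵥ f) ^ 2 = ⟪hA.eigenvectorBasis i₀, toLp 2 f⟫ ^ 2 * (g ⬝ᵥ g) := by
  have hsingle (h : n → ℝ) :
      g ⬝ᵥ h = ⟪hA.eigenvectorBasis i₀, toLp 2 g⟫ * ⟪hA.eigenvectorBasis i₀, toLp 2 h⟫ := by
    rw [hA.dotProduct_eq_sum_inner_eigenvectorBasis,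
      sum_eq_single i₀ (fun i _ hi ↦ by rw [hg i hi, zero_mul]) (by simp)]
  rw [hsingle, hsingle]
  ring

theorem mulVec_dotProduct_mulVec_mul_le {i₀ : n} {d lam : ℝ} (hd : hA.eigenvalues i₀ = d)
    (hlam : ∀ i, i ≠ i₀ → |hA.eigenvalues i| ≤ lam) (hlt : lam < d) {g : n → ℝ}
    (hg : A *ᵥ g = d • g) (f : n → ℝ) :
    ((A *ᵥ f) ⬝ᵥ (A *ᵥ f)) * (g ⬝ᵥ g) ≤
      d ^ 2 * (g ⬝ᵥ f) ^ 2 + lam ^ 2 * (f ⬝ᵥ f) * (g ⬝ᵥ g) := by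
  have hg₀ : ∀ i, i ≠ i₀ → ⟪hA.eigenvectorBasis i, toLp 2 g⟫ = 0 := fun i hi ↦
    hA.inner_eigenvectorBasis_eq_zero_of_mulVec_eq_smul hg fun h ↦
      (hlt.trans_le (le_abs_self d)).not_ge (h ▸ hlam i hi)
  rw [hA.sq_dotProduct_eq_of_inner_eigenvectorBasis_eq_zero hg₀ f, ← hd]
  have hgg : 0 ≤ g ⬝ᵥ g := by simpa only [star_trivial] using dotProduct_self_star_nonneg g
  nlinarith [mul_le_mul_of_nonneg_right (hA.mulVec_dotProduct_mulVec_le hlam f) hgg]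

end Matrix.IsHermitian

lemma mul_sq_mul_one_add_le {k d lam ε : ℝ} (hk : 1 ≤ k) (hlam : 0 ≤ lam) (hε : 0 < ε)
    (h₁ : 2 * lam * k ≤ ε * d) (h₂ : 2 * lam * k ≤ d / 2) :
    k * lam ^ 2 * (1 + ε) ≤ ε * d ^ 2 := by
  have h0 : 0 ≤ 2 * lam * k := by positivity
  have hsq : lam ^ 2 * k ^ 2 ≤ ε * d ^ 2 / 8 := by
    nlinarith [mul_le_mul h₁ h₂ h0 (h0.trans h₁)]
  nlinarith [mul_le_mul h₂ h₂ h0 (h0.trans h₂), mul_le_mul_of_nonneg_left hk (sq_nonneg lam)]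

lemma mul_le_of_le_mul_add {k d lam ε x N m : ℝ} (hk : 1 ≤ k) (hd : 0 < d) (hlam : 0 ≤ lam)
    (hε : 0 < ε) (hx : 0 < x) (h₁ : 2 * lam * k ≤ ε * d) (h₂ : 2 * lam * k ≤ d / 2)
    (hN : (1 + ε) * k * x ≤ N) (hm : d ^ 2 * x * N ≤ m * (d ^ 2 * x + lam ^ 2 * N)) :
    k * x ≤ m := by
  have hkl := mul_sq_mul_one_add_le hk hlam hε h₁ h₂
  have hN0 : 0 ≤ N := le_trans (by positivity) hN
  have hsum : (1 + ε) * (k * d ^ 2 * x + k * lam ^ 2 * N) ≤ (1 + ε) * (d ^ 2 * N) := by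
    nlinarith [mul_le_mul_of_nonneg_left hN (sq_nonneg d), mul_le_mul_of_nonneg_right hkl hN0]
  have hpos : 0 < d ^ 2 * x + lam ^ 2 * N := by positivity
  refine le_of_mul_le_mul_right ?_ hpos
  calc k * x * (d ^ 2 * x + lam ^ 2 * N) = x * (k * d ^ 2 * x + k * lam ^ 2 * N) := by ring
    _ ≤ x * (d ^ 2 * N) := by gcongr; exact le_of_mul_le_mul_left hsum (by positivity)
    _ = d ^ 2 * x * N := by ring
    _ ≤ m * (d ^ 2 * x + lam ^ 2 * N) := hm

lemma card_le_mul_card_image_of_ncard_fiber_le {α β : Type*} [Fintype α] [DecidableEq β]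
    {U : α → β} {k : ℕ} (hU : ∀ i, {v | U v = i}.ncard ≤ k) (Y : Finset α) :
    #Y ≤ k * #(Y.image U) := by
  refine card_le_mul_card_image Y k fun i _ ↦ (hU i).trans' ?_
  rw [← Set.ncard_coe_finset]
  exact Set.ncard_le_ncard (fun v hv ↦ (mem_filter.mp hv).2)

namespace SimpleGraph

variable {V : Type*} [Fintype V] (G : SimpleGraph V) [DecidableRel G.Adj]

def neighborhoodFinset (X : Finset V) : Finset V := {w | ∃ v ∈ X, G.Adj v w}

variable {G} {d : ℕ}

@[simp]
lemma mem_neighborhoodFinset {X : Finset V} {w : V} :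
    w ∈ G.neighborhoodFinset X ↔ ∃ v ∈ X, G.Adj v w := by
  simp [neighborhoodFinset]

lemma coe_image_neighborhoodFinset {β : Type*} [DecidableEq β] (U : V → β) (X : Finset V) :
    ((G.neighborhoodFinset X).image U : Set β) = {i | ∃ v ∈ X, ∃ w, U w = i ∧ G.Adj v w} := by
  ext i
  simp only [coe_image, Set.mem_image, mem_coe, mem_neighborhoodFinset, Set.mem_ofPred_eq]
  constructor
  · rintro ⟨w, ⟨v, hv, hvw⟩, rfl⟩
    exact ⟨v, hv, w, rfl, hvw⟩
  · rintro ⟨v, hv, w, rfl, hvw⟩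
    exact ⟨w, ⟨v, hv, hvw⟩, rfl⟩

lemma adjMatrix_mulVec_one_of_regular (hreg : G.IsRegularOfDegree d) :
    G.adjMatrix ℝ *ᵥ 1 = (d : ℝ) • 1 := by
  ext v
  simp [hreg v]

lemma sum_adjMatrix_mulVec_of_regular (hreg : G.IsRegularOfDegree d) (f : V → ℝ) :
    ∑ v, (G.adjMatrix ℝ *ᵥ f) v = d * ∑ v, f v := by
  have h := dotProduct_mulVec (1 : V → ℝ) (G.adjMatrix ℝ) f
  rw [← mulVec_transpose, transpose_adjMatrix, adjMatrix_mulVec_one_of_regular hreg] at h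
  simpa [dotProduct, mul_sum] using h

lemma adjMatrix_mulVec_indicator_eq_zero {X : Finset V} {w : V}
    (hw : w ∉ G.neighborhoodFinset X) :
    (G.adjMatrix ℝ *ᵥ (X : Set V).indicator 1) w = 0 := by
  rw [adjMatrix_mulVec_apply]
  refine sum_eq_zero fun u hu ↦ Set.indicator_of_notMem (fun huX ↦ hw ?_) _
  exact mem_neighborhoodFinset.mpr ⟨u, huX, G.adj_symm ((mem_neighborFinset _ _ _).mp hu)⟩

lemma sq_mul_card_le_card_neighborhoodFinset_mul (hreg : G.IsRegularOfDegree d)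
    (X : Finset V) :
    ((d : ℝ) * #X) ^ 2 ≤ #(G.neighborhoodFinset X) *
      ((G.adjMatrix ℝ *ᵥ (X : Set V).indicator 1) ⬝ᵥ
        (G.adjMatrix ℝ *ᵥ (X : Set V).indicator 1)) := by
  set s := G.adjMatrix ℝ *ᵥ (X : Set V).indicator 1
  set Y := G.neighborhoodFinset X
  have hsum : ∑ v ∈ Y, s v = d * #X := by
    rw [sum_subset (subset_univ Y) fun v _ hv ↦ adjMatrix_mulVec_indicator_eq_zero hv,
      sum_adjMatrix_mulVec_of_regular hreg, sum_indicator_subset _ (subset_univ X)]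
    simp
  calc ((d : ℝ) * #X) ^ 2 = (∑ v ∈ Y, s v) ^ 2 := by rw [hsum]
    _ ≤ #Y * ∑ v ∈ Y, s v ^ 2 := sq_sum_le_card_mul_sum_sq
    _ ≤ #Y * (s ⬝ᵥ s) := by
      gcongr
      simpa only [dotProduct, sq] using
        sum_le_sum_of_subset_of_nonneg (subset_univ Y) fun v _ _ ↦ mul_self_nonneg (s v)

theorem sq_mul_card_mul_card_le_card_neighborhoodFinset_mul [DecidableEq V]
    (hreg : G.IsRegularOfDegree d) (hA : (G.adjMatrix ℝ).IsHermitian) {i₀ : V} {lam : ℝ}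
    (hd : hA.eigenvalues i₀ = d) (hlam : ∀ i, i ≠ i₀ → |hA.eigenvalues i| ≤ lam)
    (hlt : lam < d) (X : Finset V) :
    (d : ℝ) ^ 2 * #X * Fintype.card V ≤
      #(G.neighborhoodFinset X) * ((d : ℝ) ^ 2 * #X + lam ^ 2 * Fintype.card V) := by
  set f := (X : Set V).indicator (1 : V → ℝ)
  set s := G.adjMatrix ℝ *ᵥ f
  have hspec := hA.mulVec_dotProduct_mulVec_mul_le hd hlam hlt
    (adjMatrix_mulVec_one_of_regular hreg) f
  have hcs := sq_mul_card_le_card_neighborhoodFinset_mul hreg X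
  have hff : f ⬝ᵥ f = #X := by simp [f, dotProduct, Set.indicator_apply]
  have hf : 1 ⬝ᵥ f = #X := by simp [f, dotProduct, Set.indicator_apply]
  simp only [hff, hf, one_dotProduct_one] at hspec
  obtain hX | hX := (#X).eq_zero_or_pos
  · simp only [hX, CharP.cast_eq_zero, mul_zero, zero_mul]
    positivity
  have hx : (0 : ℝ) < #X := by exact_mod_cast hX
  refine le_of_mul_le_mul_left ?_ hx
  calc (#X : ℝ) * ((d : ℝ) ^ 2 * #X * Fintype.card V)
      = ((d : ℝ) * #X) ^ 2 * Fintype.card V := by ring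
    _ ≤ #(G.neighborhoodFinset X) * (s ⬝ᵥ s) * Fintype.card V := by gcongr
    _ ≤ #(G.neighborhoodFinset X) * ((d : ℝ) ^ 2 * #X ^ 2 + lam ^ 2 * #X * Fintype.card V) := by
      rw [mul_assoc]
      gcongr
    _ = #X * (#(G.neighborhoodFinset X) * ((d : ℝ) ^ 2 * #X + lam ^ 2 * Fintype.card V)) := by
      ring

end SimpleGraph

/-- Expander neighbourhood claim: let `G` be a `d`-regular graph on `N` vertices
whose eigenvalues other than the largest (which equals `d`) have absolute value at
most `lam`, let `V(G)` be partitioned into `N/k` groups of size `k`, and let `H`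
be the bipartite graph joining `v ∈ V(G)` to group `i` iff `v` has a
`G`-neighbour in group `i`.  If `2·lam·k/d ≤ min(ε, 1/2)` and `N ≥ (1+ε)kn`,
then every `X ⊆ V(G)` with `|X| ≤ n` satisfies `|N_H(X)| ≥ |X|`. -/
theorem stmt19 (N k n d : ℕ) (lam ε : ℝ)
    (hd : 0 < d) (hk : 0 < k) (hlam : 0 ≤ lam) (hε : 0 < ε)
    (G : SimpleGraph (Fin N)) [DecidableRel G.Adj]
    (hreg : G.IsRegularOfDegree d)
    (hA : (G.adjMatrix ℝ).IsHermitian)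
    (heig : ∃ i₀ : Fin N, hA.eigenvalues i₀ = d ∧
      ∀ i : Fin N, i ≠ i₀ → |hA.eigenvalues i| ≤ lam)
    (U : Fin N → Fin (N / k))
    (hU : ∀ i : Fin (N / k), {v : Fin N | U v = i}.ncard = k)
    (hexp : 2 * lam * k / d ≤ min ε (1 / 2))
    (hN : (1 + ε) * k * n ≤ N) :
    ∀ X : Finset (Fin N), X.card ≤ n →
      X.card ≤ {i : Fin (N / k) | ∃ v ∈ X, ∃ w : Fin N, U w = i ∧ G.Adj v w}.ncard := by
  intro X hXn
  obtain rfl | hX := X.eq_empty_or_nonempty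
  · simp
  obtain ⟨i₀, hd₀, hlam₀⟩ := heig
  have hd' : (0 : ℝ) < d := by exact_mod_cast hd
  have hk' : (1 : ℝ) ≤ k := by exact_mod_cast hk
  obtain ⟨h₁, h₂⟩ := le_min_iff.mp hexp
  rw [div_le_iff₀ hd'] at h₁ h₂
  have hY := G.sq_mul_card_mul_card_le_card_neighborhoodFinset_mul hreg hA hd₀ hlam₀
    (by nlinarith) X
  rw [Fintype.card_fin] at hY
  have hxN : (1 + ε) * k * #X ≤ (N : ℝ) := hN.trans' (by gcongr)
  have hkY : k * #X ≤ #(G.neighborhoodFinset X) := by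
    exact_mod_cast mul_le_of_le_mul_add hk' hd' hlam hε (by exact_mod_cast hX.card_pos)
      (by linarith) (by linarith) hxN hY
  have hYU :=
    card_le_mul_card_image_of_ncard_fiber_le (fun i ↦ (hU i).le) (G.neighborhoodFinset X)
  rw [← G.coe_image_neighborhoodFinset, Set.ncard_coe_finset]
  exact Nat.le_of_mul_le_mul_left (hkY.trans hYU) hk
end
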